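/- arXiv:1411.4592 — 8 statements merged into one kernel-verified Lean document; each statement's English description precedes it below -/
import Mathlib

section
/- Let n ≥ 2, let T be an invertible n×n real Toeplitz matrix, and let u = (u₁,…,u_{n+1}) ∈ ℝ^{n+1} with u₁ ≠ 0 and u_{n+1} ≠ 0. Then u lies in the kernel of ∂T if and only if both C_b(u)·T and T·C_l(u) are Toeplitz matrices and C_b(u)·T = T·C_l(u). -/
open Matrix Polynomial

noncomputable section

/-- Top companion matrix of `u`. -/
def Ct (n : ℕ) (u : Fin (n + 1) → ℝ) : Matrix (Fin n) (Fin n) ℝ :=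
  Matrix.of fun i j =>
    if i.val = 0 then -u ⟨n - 1 - j.val, by omega⟩ / u (Fin.last n)
    else if j.val + 1 = i.val then 1 else 0

/-- Bottom companion matrix of `u`. -/
def Cb (n : ℕ) (u : Fin (n + 1) → ℝ) : Matrix (Fin n) (Fin n) ℝ :=
  Matrix.of fun i j =>
    if i.val = n - 1 then -u ⟨n - j.val, by omega⟩ / u 0
    else if j.val = i.val + 1 then 1 else 0

/-- Left companion matrix of `u`. -/
def Cl (n : ℕ) (u : Fin (n + 1) → ℝ) : Matrix (Fin n) (Fin n) ℝ :=
  Matrix.of fun i j =>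
    if j.val = 0 then -u ⟨i.val + 1, by have := i.isLt; omega⟩ / u 0
    else if i.val + 1 = j.val then 1 else 0

/-- Right companion matrix of `u`. -/
def Cr (n : ℕ) (u : Fin (n + 1) → ℝ) : Matrix (Fin n) (Fin n) ℝ :=
  Matrix.of fun i j =>
    if j.val = n - 1 then -u ⟨i.val, by have := i.isLt; omega⟩ / u (Fin.last n)
    else if i.val = j.val + 1 then 1 else 0

/-- A square matrix is Toeplitz if entries depend only on the difference of indices. -/
def IsToeplitz {n : ℕ} (T : Matrix (Fin n) (Fin n) ℝ) : Prop :=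
  ∀ (i j : Fin n) (hi : i.val + 1 < n) (hj : j.val + 1 < n),
    T ⟨i.val + 1, hi⟩ ⟨j.val + 1, hj⟩ = T i j

/-- A square matrix is Hankel if entries depend only on the sum of indices. -/
def IsHankel {n : ℕ} (H : Matrix (Fin n) (Fin n) ℝ) : Prop :=
  ∀ (i j : Fin n) (hi : i.val + 1 < n) (hj : j.val + 1 < n),
    H ⟨i.val + 1, hi⟩ j = H i ⟨j.val + 1, hj⟩

/-- `∂T` for a Toeplitz matrix `T`: the (n-1)×(n+1) matrix with entries `a_{i+1-j}`
(1-based), expressed via the entries of `T`. -/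
def dT {n : ℕ} (T : Matrix (Fin n) (Fin n) ℝ) : Matrix (Fin (n - 1)) (Fin (n + 1)) ℝ :=
  Matrix.of fun i j =>
    if j.val = 0 then
      T ⟨i.val + 1, by have := i.isLt; omega⟩ ⟨0, by have := i.isLt; omega⟩
    else
      T ⟨i.val, by have := i.isLt; omega⟩ ⟨j.val - 1, by have := i.isLt; have := j.isLt; omega⟩

/-- `∂H` for a Hankel matrix `H`: the (n-1)×(n+1) matrix with entries `a_{i+j-n-1}`
(1-based), expressed via the entries of `H`. -/
def dH {n : ℕ} (H : Matrix (Fin n) (Fin n) ℝ) : Matrix (Fin (n - 1)) (Fin (n + 1)) ℝ :=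
  Matrix.of fun i j =>
    if h : j.val < n then H ⟨i.val, by have := i.isLt; omega⟩ ⟨j.val, h⟩
    else H ⟨i.val + 1, by have := i.isLt; omega⟩ ⟨n - 1, by have := i.isLt; omega⟩

/-- The reversed vector `u^J`. -/
def revVec {m : ℕ} (u : Fin m → ℝ) : Fin m → ℝ := fun i => u i.rev

/-- The lower triangular Toeplitz matrix `U₊(u)` with first column `(u₁,…,u_n)ᵀ`. -/
def Uplus (n : ℕ) (u : Fin (n + 1) → ℝ) : Matrix (Fin n) (Fin n) ℝ :=
  Matrix.of fun i j =>
    if j.val ≤ i.val then u ⟨i.val - j.val, by have := i.isLt; omega⟩ else 0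

/-- The upper triangular Toeplitz matrix `U₋(u)` with first row `(u_{n+1},…,u₂)`. -/
def Uminus (n : ℕ) (u : Fin (n + 1) → ℝ) : Matrix (Fin n) (Fin n) ℝ :=
  Matrix.of fun i j =>
    if h : i.val ≤ j.val then u ⟨n + i.val - j.val, by have := j.isLt; omega⟩ else 0

/-- The flip (exchange) matrix `J`. -/
def Jmat (n : ℕ) : Matrix (Fin n) (Fin n) ℝ :=
  Matrix.of fun i j => if j = i.rev then 1 else 0

/-- The Toeplitz Bezoutian `B_T(u,v) = U₊(u)U₋(v) − U₊(v)U₋(u)`. -/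
def BT (n : ℕ) (u v : Fin (n + 1) → ℝ) : Matrix (Fin n) (Fin n) ℝ :=
  Uplus n u * Uminus n v - Uplus n v * Uminus n u

/-- The Hankel Bezoutian `B_H(u,v) = U₊(v)JU₋(u) − U₊(u)JU₋(v)`. -/
def BH (n : ℕ) (u v : Fin (n + 1) → ℝ) : Matrix (Fin n) (Fin n) ℝ :=
  Uplus n v * Jmat n * Uminus n u - Uplus n u * Jmat n * Uminus n v

/-- The polynomial `u(λ) = u₁ + u₂λ + ⋯ + u_{n+1}λⁿ` associated to a vector. -/
def polyOf {m : ℕ} (u : Fin m → ℝ) : Polynomial ℝ :=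
  ∑ i : Fin m, Polynomial.C (u i) * Polynomial.X ^ (i : ℕ)

/-!
Toeplitz matrices are persymmetric, `J Tᵀ J = T` with `J` the flip, and `C_b(u) = J C_l(u)ᵀ J`;
hence `C_b(u) T = J (T C_l(u))ᵀ J` for Toeplitz `T`. The product `T C_l(u)` moves the columns of
`T` one step to the right and has first column `-T (u₂, …, u_{n+1})ᵀ / u₁`, so it is Toeplitz
exactly when this column is the first column of `T` shifted up by one, which is the equation
`∂T u = 0` read row by row. Once `T C_l(u)` is Toeplitz, persymmetry gives `C_b(u) T = T C_l(u)`.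
-/

namespace IsToeplitz

variable {n : ℕ} {T : Matrix (Fin n) (Fin n) ℝ}

theorem apply_add_add (hT : IsToeplitz T) (p q k : ℕ) (hp : p + k < n) (hq : q + k < n) :
    T ⟨p + k, hp⟩ ⟨q + k, hq⟩ = T ⟨p, by omega⟩ ⟨q, by omega⟩ := by
  induction k with
  | zero => rfl
  | succ k ih => exact (hT ⟨p + k, by omega⟩ ⟨q + k, by omega⟩ hp hq).trans (ih _ _)

theorem apply_eq (hT : IsToeplitz T) {p q p' q' : Fin n} (h : p.val + q'.val = p'.val + q.val) :
    T p q = T p' q' := by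
  wlog hle : p.val ≤ p'.val generalizing p q p' q'
  · exact (this h.symm (by omega)).symm
  obtain ⟨k, hk⟩ : ∃ k, p'.val = p.val + k := ⟨p'.val - p.val, by omega⟩
  rw [← hT.apply_add_add p q k (by omega) (by omega)]
  congr 1 <;> ext <;> simp only <;> omega

theorem transpose_submatrix_rev (hT : IsToeplitz T) : Tᵀ.submatrix Fin.rev Fin.rev = T := by
  ext i j
  exact hT.apply_eq (by simp only [Fin.val_rev]; omega)

end IsToeplitz

section Companion

variable {n : ℕ} (u : Fin (n + 1) → ℝ)

theorem Cb_eq_transpose_submatrix_rev : Cb n u = (Cl n u)ᵀ.submatrix Fin.rev Fin.rev := by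
  ext i j
  simp only [Cb, Cl, Matrix.submatrix_apply, Matrix.transpose_apply, Matrix.of_apply, Fin.val_rev]
  have := i.isLt
  have := j.isLt
  split_ifs <;> first | omega | rfl | (congr 3; ext; simp only; omega)

theorem Cb_mul_eq_transpose_submatrix_rev {T : Matrix (Fin n) (Fin n) ℝ} (hT : IsToeplitz T) :
    Cb n u * T = (T * Cl n u)ᵀ.submatrix Fin.rev Fin.rev := by
  rw [Matrix.transpose_mul, Matrix.submatrix_mul _ _ _ _ _ Fin.rev_bijective,
    hT.transpose_submatrix_rev, Cb_eq_transpose_submatrix_rev]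

end Companion

section MulCl

variable {n : ℕ} (T : Matrix (Fin n) (Fin n) ℝ) (u : Fin (n + 1) → ℝ)

theorem mul_Cl_apply_succ (i j : Fin n) (hj : j.val + 1 < n) :
    (T * Cl n u) i ⟨j.val + 1, hj⟩ = T i j := by
  rw [Matrix.mul_apply, Finset.sum_eq_single j]
  · simp [Cl]
  · intro k _ hk
    simp only [Cl, Matrix.of_apply]
    rw [if_neg (by omega), if_neg (fun h => hk (by ext; omega)), mul_zero]
  · simp

theorem mul_Cl_apply_zero (i : Fin n) :
    (T * Cl n u) i ⟨0, i.pos⟩ = -(∑ k : Fin n, T i k * u k.succ) / u 0 := by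
  simp only [Matrix.mul_apply, Cl, Matrix.of_apply, if_true, Finset.sum_div,
    ← Finset.sum_neg_distrib]
  exact Finset.sum_congr rfl fun k _ => by
    change T i k * (-u k.succ / u 0) = _
    ring

theorem dT_mulVec_apply (i : Fin (n - 1)) :
    (dT T *ᵥ u) i = u 0 * T ⟨i.val + 1, by have := i.isLt; omega⟩ ⟨0, by have := i.isLt; omega⟩
      + ∑ k : Fin n, T ⟨i.val, by have := i.isLt; omega⟩ k * u k.succ := by
  rw [Matrix.mulVec, dotProduct, Fin.sum_univ_succ]
  simp [dT, mul_comm]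

theorem dT_mulVec_eq_zero_iff (hu : u 0 ≠ 0) :
    dT T *ᵥ u = 0 ↔ ∀ (i : Fin n) (hi : i.val + 1 < n),
      (T * Cl n u) i ⟨0, i.pos⟩ = T ⟨i.val + 1, hi⟩ ⟨0, i.pos⟩ := by
  have row (i : Fin n) (hi : i.val + 1 < n) : (dT T *ᵥ u) ⟨i.val, by omega⟩
      = u 0 * (T ⟨i.val + 1, hi⟩ ⟨0, i.pos⟩ - (T * Cl n u) i ⟨0, i.pos⟩) := by
    rw [dT_mulVec_apply, mul_Cl_apply_zero]
    field_simp
    ring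
  constructor
  · intro h i hi
    have := row i hi
    rw [h, Pi.zero_apply, eq_comm, mul_eq_zero, sub_eq_zero] at this
    exact (this.resolve_left hu).symm
  · intro h
    ext i
    have hi : i.val + 1 < n := by omega
    have := row ⟨i.val, by omega⟩ hi
    rwa [h _ hi, sub_self, mul_zero] at this

theorem isToeplitz_mul_Cl_iff (hT : IsToeplitz T) :
    IsToeplitz (T * Cl n u) ↔ ∀ (i : Fin n) (hi : i.val + 1 < n),
      (T * Cl n u) i ⟨0, i.pos⟩ = T ⟨i.val + 1, hi⟩ ⟨0, i.pos⟩ := by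
  constructor
  · intro h i hi
    have h1 : 0 + 1 < n := by omega
    rw [← h i ⟨0, i.pos⟩ hi h1]
    exact mul_Cl_apply_succ T u _ ⟨0, i.pos⟩ h1
  · intro h i j hi hj
    rw [mul_Cl_apply_succ]
    rcases j with ⟨_ | j, hj'⟩
    · exact (h i hi).symm
    · rw [show (⟨j + 1, hj'⟩ : Fin n) = ⟨(⟨j, by omega⟩ : Fin n).val + 1, hj'⟩ from rfl,
        mul_Cl_apply_succ]
      exact hT i ⟨j, by omega⟩ hi hj'

end MulCl

theorem toeplitz_similarity_bottom_left_general
    (n : ℕ) (T : Matrix (Fin n) (Fin n) ℝ)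
    (hT : IsToeplitz T)
    (u : Fin (n + 1) → ℝ) (hu1 : u 0 ≠ 0) :
    (dT T).mulVec u = 0 ↔
      (IsToeplitz (Cb n u * T) ∧ IsToeplitz (T * Cl n u) ∧
        Cb n u * T = T * Cl n u) := by
  rw [dT_mulVec_eq_zero_iff T u hu1, ← isToeplitz_mul_Cl_iff T u hT]
  refine ⟨fun h => ?_, fun h => h.2.1⟩
  have e : Cb n u * T = T * Cl n u := by
    rw [Cb_mul_eq_transpose_submatrix_rev u hT, h.transpose_submatrix_rev]
  exact ⟨e ▸ h, h, e⟩

/-- Theorem (Toeplitz similarity, bottom/left version): for an invertible Toeplitz `T`,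
`u ∈ ker ∂T` iff `C_b(u)T` and `TC_l(u)` are Toeplitz and `C_b(u)T = TC_l(u)`. -/
theorem toeplitz_similarity_bottom_left
    (n : ℕ) (hn : 2 ≤ n) (T : Matrix (Fin n) (Fin n) ℝ)
    (hTinv : IsUnit T.det) (hT : IsToeplitz T)
    (u : Fin (n + 1) → ℝ) (hu1 : u 0 ≠ 0) (hun : u (Fin.last n) ≠ 0) :
    (dT T).mulVec u = 0 ↔
      (IsToeplitz (Cb n u * T) ∧ IsToeplitz (T * Cl n u) ∧
        Cb n u * T = T * Cl n u) :=
  toeplitz_similarity_bottom_left_general n T hT u hu1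
end
end

section
/- Let n ≥ 2, let T be an invertible n×n real Toeplitz matrix, and let u = (u₁,…,u_{n+1}) ∈ ℝ^{n+1} with u₁ ≠ 0 and u_{n+1} ≠ 0. If u lies in the kernel of ∂T, then for every integer k (positive, zero, or negative), T⁻¹·C_t(u)^k·T = C_r(u)^k. -/
/-! Writing the Toeplitz matrix as `T i j = a (i - j)`, the identity `C_t(u) T = T C_r(u)` is
checked entrywise: off the first row of `C_t(u)` and the last column of `C_r(u)` both sides are
shifts of `T`, and on that row and column it is exactly the equation `∑ₘ uₘ a (d - m) = 0`,
`1 ≤ d ≤ n - 1`, expressing `u ∈ ker ∂T`. Conjugation by `T` then commutes with all integer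
powers; for negative ones because `(X Y)⁻¹ = Y⁻¹ X⁻¹` holds for `Matrix.nonsing_inv` on all
square matrices, singular or not. -/

open Matrix Polynomial

noncomputable section

namespace Matrix

variable {m : Type*} [Fintype m] [DecidableEq m] {R : Type*} [CommRing R]

theorem inv_mul_mul_zpow {T : Matrix m m R} (hT : IsUnit T.det) (A : Matrix m m R) (k : ℤ) :
    (T⁻¹ * A * T) ^ k = T⁻¹ * A ^ k * T := by
  obtain ⟨U, rfl⟩ := (isUnit_iff_isUnit_det T).mpr hT
  have hpow (p : ℕ) : ((U : Matrix m m R)⁻¹ * A * U) ^ p = (U : Matrix m m R)⁻¹ * A ^ p * U := by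
    rw [← coe_units_inv]; exact Units.conj_pow' U A p
  cases k with
  | ofNat p => exact_mod_cast hpow p
  | negSucc p =>
    rw [zpow_negSucc, zpow_negSucc, hpow, Matrix.mul_inv_rev, Matrix.mul_inv_rev,
      nonsing_inv_nonsing_inv _ hT, Matrix.mul_assoc]

end Matrix

namespace IsToeplitz

variable {n : ℕ} {T : Matrix (Fin n) (Fin n) ℝ}

theorem apply_sub (hT : IsToeplitz T) (i j : Fin n) {k : ℕ} (hi : k ≤ i) (hj : k ≤ j) :
    T ⟨i - k, by omega⟩ ⟨j - k, by omega⟩ = T i j := by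
  induction k with
  | zero => rfl
  | succ k ih =>
    rw [← ih (by omega) (by omega), ← hT ⟨i - (k + 1), by omega⟩ ⟨j - (k + 1), by omega⟩
      (by simp only; omega) (by simp only; omega)]
    congr 2 <;> simp only <;> omega

theorem exists_apply_eq (hT : IsToeplitz T) :
    ∃ a : ℤ → ℝ, ∀ i j : Fin n, T i j = a ((i : ℕ) - (j : ℕ)) := by
  refine ⟨fun d => if h : d.toNat < n ∧ (-d).toNat < n then
    T ⟨d.toNat, h.1⟩ ⟨(-d).toNat, h.2⟩ else 0, fun i j => ?_⟩
  have h : (((i : ℕ) : ℤ) - (j : ℕ)).toNat < n ∧ (-(((i : ℕ) : ℤ) - (j : ℕ))).toNat < n := by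
    omega
  dsimp only
  rw [dif_pos h, ← hT.apply_sub i j (k := min i j) (by omega) (by omega)]
  congr 2 <;> omega

end IsToeplitz

section Companion

variable {n : ℕ} (u : Fin (n + 1) → ℝ) (M : Matrix (Fin n) (Fin n) ℝ)

theorem Ct_mul_apply_of_ne_zero {i : Fin n} (hi : (i : ℕ) ≠ 0) (j : Fin n) :
    (Ct n u * M) i j = M ⟨i - 1, by omega⟩ j := by
  rw [mul_apply, Finset.sum_eq_single ⟨i - 1, by omega⟩]
  · simp [Ct, hi, Nat.sub_add_cancel (Nat.one_le_iff_ne_zero.mpr hi)]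
  · intro b _ hb
    have : (b : ℕ) + 1 ≠ i := fun h => hb (Fin.ext (by simp only; omega))
    simp [Ct, hi, this]
  · simp

theorem Ct_mul_apply_of_eq_zero {i : Fin n} (hi : (i : ℕ) = 0) (j : Fin n) :
    (Ct n u * M) i j = -(∑ k : Fin n, u k.castSucc * M k.rev j) / u (Fin.last n) := by
  rw [mul_apply, ← Equiv.sum_comp Fin.revPerm, neg_div, Finset.sum_div, ← Finset.sum_neg_distrib]
  refine Finset.sum_congr rfl fun k _ => ?_
  have : (⟨n - 1 - (k.rev : ℕ), by omega⟩ : Fin (n + 1)) = k.castSucc := by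
    ext; simp only [Fin.val_rev, Fin.val_castSucc]; omega
  simp only [Ct, of_apply, hi, if_true, Fin.revPerm_apply, this]
  ring

theorem mul_Cr_apply_of_ne_last (i : Fin n) {j : Fin n} (hj : (j : ℕ) ≠ n - 1) :
    (M * Cr n u) i j = M i ⟨j + 1, by omega⟩ := by
  rw [mul_apply, Finset.sum_eq_single ⟨j + 1, by omega⟩]
  · simp [Cr, hj]
  · intro b _ hb
    have : (b : ℕ) ≠ j + 1 := fun h => hb (Fin.ext h)
    simp [Cr, hj, this]
  · simp

theorem mul_Cr_apply_of_eq_last (i : Fin n) {j : Fin n} (hj : (j : ℕ) = n - 1) :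
    (M * Cr n u) i j = -(∑ k : Fin n, M i k * u k.castSucc) / u (Fin.last n) := by
  rw [mul_apply, neg_div, Finset.sum_div, ← Finset.sum_neg_distrib]
  refine Finset.sum_congr rfl fun k _ => ?_
  simp only [Cr, of_apply, hj, if_true]
  change M i k * (-u k.castSucc / u (Fin.last n)) = _
  ring

end Companion

theorem sum_mul_apply_sub_eq_zero_of_dT_mulVec_eq_zero {n : ℕ} {T : Matrix (Fin n) (Fin n) ℝ}
    {a : ℤ → ℝ} (ha : ∀ i j : Fin n, T i j = a ((i : ℕ) - (j : ℕ))) {u : Fin (n + 1) → ℝ}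
    (hker : dT T *ᵥ u = 0) {d : ℕ} (hd : 1 ≤ d) (hdn : d < n) :
    ∑ m : Fin (n + 1), u m * a (d - (m : ℕ)) = 0 := by
  calc _ = (dT T *ᵥ u) ⟨d - 1, by omega⟩ := by
        rw [mulVec, dotProduct]
        refine Finset.sum_congr rfl fun m _ => ?_
        rw [mul_comm]
        congr 1
        by_cases hm : (m : ℕ) = 0 <;> simp only [dT, of_apply, hm, if_true, if_false, ha] <;>
          congr 1 <;> omega
    _ = 0 := congrFun hker _

theorem Ct_mul_eq_mul_Cr {n : ℕ} {T : Matrix (Fin n) (Fin n) ℝ} (hT : IsToeplitz T)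
    {u : Fin (n + 1) → ℝ} (hun : u (Fin.last n) ≠ 0) (hker : dT T *ᵥ u = 0) :
    Ct n u * T = T * Cr n u := by
  obtain ⟨a, ha⟩ := hT.exists_apply_eq
  set S : ℤ → ℝ := fun d => -(∑ m : Fin n, u m.castSucc * a (d - (m : ℕ))) / u (Fin.last n)
  have hCt (j : Fin n) :
      -(∑ k : Fin n, u k.castSucc * T k.rev j) / u (Fin.last n) = S (n - 1 - j : ℕ) := by
    congr 2
    refine Finset.sum_congr rfl fun m _ => ?_
    rw [ha]
    congr 2
    simp only [Fin.val_rev]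
    omega
  have hCr (i : Fin n) : -(∑ k : Fin n, T i k * u k.castSucc) / u (Fin.last n) = S i := by
    simp only [S, ha, mul_comm]
  have hS (d : ℕ) (hd : 1 ≤ d) (hdn : d < n) : S d = a (d - n) := by
    have h := sum_mul_apply_sub_eq_zero_of_dT_mulVec_eq_zero ha hker hd hdn
    rw [Fin.sum_univ_castSucc] at h
    simp only [Fin.val_castSucc, Fin.val_last] at h
    simp only [S]
    field_simp
    linarith
  ext i j
  by_cases hi : (i : ℕ) = 0 <;> by_cases hj : (j : ℕ) = n - 1
  · rw [Ct_mul_apply_of_eq_zero u T hi, mul_Cr_apply_of_eq_last u T i hj, hCt, hCr]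
    congr 2
    omega
  · rw [Ct_mul_apply_of_eq_zero u T hi, mul_Cr_apply_of_ne_last u T i hj, hCt,
      hS _ (by omega) (by omega), ha]
    congr 1
    simp only
    omega
  · rw [Ct_mul_apply_of_ne_zero u T hi, mul_Cr_apply_of_eq_last u T i hj, hCr,
      hS _ (by omega) (by omega), ha]
    congr 1
    simp only
    omega
  · rw [Ct_mul_apply_of_ne_zero u T hi, mul_Cr_apply_of_ne_last u T i hj, ha, ha]
    congr 1
    simp only
    omega

theorem toeplitz_similarity_all_powers_general
    (n : ℕ) (T : Matrix (Fin n) (Fin n) ℝ)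
    (hTinv : IsUnit T.det) (hT : IsToeplitz T)
    (u : Fin (n + 1) → ℝ) (hun : u (Fin.last n) ≠ 0)
    (hker : (dT T).mulVec u = 0) :
    ∀ k : ℤ, T⁻¹ * Ct n u ^ k * T = Cr n u ^ k := by
  intro k
  have hCr : Cr n u = T⁻¹ * Ct n u * T := by
    rw [Matrix.mul_assoc, Ct_mul_eq_mul_Cr hT hun hker, ← Matrix.mul_assoc,
      nonsing_inv_mul T hTinv, Matrix.one_mul]
  rw [hCr, inv_mul_mul_zpow hTinv]

/-- If `u ∈ ker ∂T` for an invertible Toeplitz `T`, then `T⁻¹ C_t(u)^k T = C_r(u)^k`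
for every integer `k`. -/
theorem toeplitz_similarity_all_powers
    (n : ℕ) (hn : 2 ≤ n) (T : Matrix (Fin n) (Fin n) ℝ)
    (hTinv : IsUnit T.det) (hT : IsToeplitz T)
    (u : Fin (n + 1) → ℝ) (hu1 : u 0 ≠ 0) (hun : u (Fin.last n) ≠ 0)
    (hker : (dT T).mulVec u = 0) :
    ∀ k : ℤ, T⁻¹ * Ct n u ^ k * T = Cr n u ^ k :=
  toeplitz_similarity_all_powers_general n T hTinv hT u hun hker
end
end

section
/- Let n ≥ 2, let H be an invertible n×n real Hankel matrix, and let u = (u₁,…,u_{n+1}) ∈ ℝ^{n+1} with u₁ ≠ 0 and u_{n+1} ≠ 0. Then the reversed vector u^J lies in the kernel of ∂H if and only if both C_t(u)·H and H·C_l(u^J) are Hankel matrices and C_t(u)·H = H·C_l(u^J). -/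
/-!
Write `H_{ij} = b_{i+j+1}` (0-based indices) for a sequence `b` and let
`r_m = ∑ₖ b_{m+k} u_{n+1-k}`, so that `(∂H) u^J = (r_1, …, r_{n-1})`. The matrix `M = C_t(u) H`
has entries `b_{i+j} - δ_{i0} r_j / u_{n+1}`, and `H C_l(u^J) = Mᵀ` since `C_l(u^J) = C_t(u)ᵀ`
and `H` is symmetric. Hence `M = Mᵀ` iff `r_1 = ⋯ = r_{n-1} = 0`, and then `M` is the Hankel
matrix of `b`.
-/

open Matrix Polynomial

noncomputable section

def hankel (n : ℕ) (a : ℕ → ℝ) : Matrix (Fin n) (Fin n) ℝ :=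
  of fun i j => a (i + j)

def recurrenceResidual {n : ℕ} (u : Fin (n + 1) → ℝ) (a : ℕ → ℝ) (m : ℕ) : ℝ :=
  ∑ k : Fin (n + 1), a (m + k) * u k.rev

section Hankel

variable {n : ℕ}

theorem isHankel_transpose_iff {M : Matrix (Fin n) (Fin n) ℝ} : IsHankel Mᵀ ↔ IsHankel M :=
  ⟨fun h i j hi hj => (h j i hj hi).symm, fun h i j hi hj => (h j i hj hi).symm⟩

theorem transpose_hankel (a : ℕ → ℝ) : (hankel n a)ᵀ = hankel n a := by
  ext i j
  simp [hankel, add_comm]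

theorem IsHankel.exists_eq_hankel {H : Matrix (Fin n) (Fin n) ℝ} (hH : IsHankel H) :
    ∃ a : ℕ → ℝ, H = hankel n a := by
  -- read `a` off the first row and the last column
  let a : ℕ → ℝ := fun d =>
    if h : d < n then H ⟨0, by omega⟩ ⟨d, h⟩
    else if h' : d + 1 < 2 * n then H ⟨d + 1 - n, by omega⟩ ⟨n - 1, by omega⟩ else 0
  refine ⟨a, ?_⟩
  suffices key : ∀ (i : ℕ) (hi : i < n) (j : ℕ) (hj : j < n), H ⟨i, hi⟩ ⟨j, hj⟩ = a (i + j) by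
    ext i j
    exact key i i.isLt j j.isLt
  intro i
  induction i with
  | zero => intro hi j hj; simp [a, hj]
  | succ i ih =>
    intro hi j hj
    by_cases hj' : j + 1 < n
    · rw [hH ⟨i, by omega⟩ ⟨j, hj⟩ hi hj', ih (by omega) (j + 1) hj']
      ring_nf
    · have hjn : j = n - 1 := by omega
      subst hjn
      simp only [a, dif_neg (show ¬(i + 1 + (n - 1) < n) by omega),
        dif_pos (show i + 1 + (n - 1) + 1 < 2 * n by omega)]
      congr 2
      omega

theorem dH_hankel_apply (a : ℕ → ℝ) (i : Fin (n - 1)) (j : Fin (n + 1)) :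
    dH (hankel n a) i j = a (i + j) := by
  simp only [dH, hankel, of_apply]
  split_ifs with hj
  · rfl
  · congr 1
    omega

theorem dH_hankel_succ_mulVec_revVec (b : ℕ → ℝ) (u : Fin (n + 1) → ℝ) :
    dH (hankel n fun d => b (d + 1)) *ᵥ revVec u =
      fun i : Fin (n - 1) => recurrenceResidual u b (i + 1) := by
  ext i
  simp only [mulVec, dotProduct, dH_hankel_apply, recurrenceResidual, revVec, add_right_comm]

theorem dH_hankel_succ_mulVec_revVec_eq_zero_iff (b : ℕ → ℝ) (u : Fin (n + 1) → ℝ) :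
    dH (hankel n fun d => b (d + 1)) *ᵥ revVec u = 0 ↔
      ∀ j, 0 < j → j < n → recurrenceResidual u b j = 0 := by
  rw [dH_hankel_succ_mulVec_revVec, funext_iff]
  refine ⟨fun h j hj0 hjn => ?_, fun h i => h _ (by omega) (by omega)⟩
  obtain ⟨i, rfl⟩ := Nat.exists_eq_add_of_lt hj0
  simpa using h ⟨i, by omega⟩

theorem cl_revVec_eq_transpose_ct (u : Fin (n + 1) → ℝ) : Cl n (revVec u) = (Ct n u)ᵀ := by
  ext i j
  simp only [Cl, Ct, revVec, transpose_apply, of_apply]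
  rw [Fin.rev_zero]
  congr 4
  ext
  simp only [Fin.val_rev]
  omega

theorem ct_mul_hankel_succ_apply (b : ℕ → ℝ) {u : Fin (n + 1) → ℝ} (hu : u (Fin.last n) ≠ 0)
    (i j : Fin n) :
    (Ct n u * hankel n fun d => b (d + 1)) i j =
      b (i + j) - if (i : ℕ) = 0 then recurrenceResidual u b j / u (Fin.last n) else 0 := by
  rw [mul_apply]
  by_cases hi : (i : ℕ) = 0
  · simp only [Ct, hankel, of_apply, if_pos hi, recurrenceResidual, Fin.sum_univ_succ, Fin.rev_zero]
    have hS : ∑ k : Fin n, b (j + k.succ) * u k.succ.rev =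
        ∑ k : Fin n, u ⟨n - 1 - k, by omega⟩ * b (k + j + 1) := by
      refine Finset.sum_congr rfl fun k _ => ?_
      rw [mul_comm]
      congr 2
      · ext
        simp only [Fin.val_rev, Fin.val_succ]
        omega
      · simp only [Fin.val_succ]
        ring
    rw [hS, hi, Fin.val_zero, zero_add, add_zero]
    simp only [neg_div, neg_mul, Finset.sum_neg_distrib, div_mul_eq_mul_div, ← Finset.sum_div]
    field_simp
    ring
  · rw [Fintype.sum_eq_single ⟨i - 1, by omega⟩]
    · simp only [Ct, hankel, of_apply, if_neg hi, Nat.sub_add_cancel (Nat.pos_of_ne_zero hi),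
        if_true, one_mul, sub_zero]
      congr 1
      omega
    · intro k hk
      simp only [Ct, of_apply, if_neg hi]
      rw [if_neg fun h => hk (Fin.ext (by simp only; omega)), zero_mul]

theorem isHankel_ct_mul_hankel_succ (b : ℕ → ℝ) {u : Fin (n + 1) → ℝ} (hu : u (Fin.last n) ≠ 0)
    (h : ∀ j, 0 < j → j < n → recurrenceResidual u b j = 0) :
    IsHankel (Ct n u * hankel n fun d => b (d + 1)) := by
  intro i j hi hj
  simp only [ct_mul_hankel_succ_apply b hu, Nat.add_one_ne_zero, if_false, sub_zero]
  split_ifs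
  · rw [h _ (Nat.succ_pos _) hj, zero_div, sub_zero, add_right_comm, add_assoc]
  · rw [sub_zero, add_right_comm, add_assoc]

theorem ct_mul_hankel_succ_eq_transpose_iff (b : ℕ → ℝ) {u : Fin (n + 1) → ℝ}
    (hu : u (Fin.last n) ≠ 0) :
    (Ct n u * hankel n fun d => b (d + 1)) = (Ct n u * hankel n fun d => b (d + 1))ᵀ ↔
      ∀ j, 0 < j → j < n → recurrenceResidual u b j = 0 := by
  constructor
  · intro h j hj0 hjn
    have hentry := congrFun (congrFun h ⟨0, by omega⟩) ⟨j, hjn⟩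
    simpa [ct_mul_hankel_succ_apply b hu, hj0.ne', add_comm, hu] using hentry
  · intro h
    have hr : ∀ k : Fin n, (k : ℕ) ≠ 0 → recurrenceResidual u b k = 0 :=
      fun k hk => h k (Nat.pos_of_ne_zero hk) k.isLt
    ext i j
    simp only [transpose_apply, ct_mul_hankel_succ_apply b hu, add_comm (j : ℕ)]
    by_cases hi : (i : ℕ) = 0 <;> by_cases hj : (j : ℕ) = 0 <;> simp [hi, hj, hr]

end Hankel

theorem hankel_similarity_top_left_general
    (n : ℕ) (H : Matrix (Fin n) (Fin n) ℝ)
    (hH : IsHankel H)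
    (u : Fin (n + 1) → ℝ) (hun : u (Fin.last n) ≠ 0) :
    (dH H).mulVec (revVec u) = 0 ↔
      (IsHankel (Ct n u * H) ∧ IsHankel (H * Cl n (revVec u)) ∧
        Ct n u * H = H * Cl n (revVec u)) := by
  obtain ⟨a, rfl⟩ := hH.exists_eq_hankel
  obtain ⟨b, rfl⟩ : ∃ b : ℕ → ℝ, a = fun d => b (d + 1) := ⟨fun d => a (d - 1), by simp⟩
  have hsymm : (hankel n fun d => b (d + 1)) * Cl n (revVec u) =
      (Ct n u * hankel n fun d => b (d + 1))ᵀ := by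
    rw [transpose_mul, transpose_hankel, cl_revVec_eq_transpose_ct]
  rw [hsymm, isHankel_transpose_iff, dH_hankel_succ_mulVec_revVec_eq_zero_iff,
    ct_mul_hankel_succ_eq_transpose_iff b hun]
  exact ⟨fun h => ⟨isHankel_ct_mul_hankel_succ b hun h, isHankel_ct_mul_hankel_succ b hun h, h⟩,
    fun h => h.2.2⟩

/-- Corollary (Hankel similarity, top/left version): for an invertible Hankel `H`,
`u^J ∈ ker ∂H` iff `C_t(u)H` and `HC_l(u^J)` are Hankel and `C_t(u)H = HC_l(u^J)`. -/
theorem hankel_similarity_top_left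
    (n : ℕ) (hn : 2 ≤ n) (H : Matrix (Fin n) (Fin n) ℝ)
    (hHinv : IsUnit H.det) (hH : IsHankel H)
    (u : Fin (n + 1) → ℝ) (hu1 : u 0 ≠ 0) (hun : u (Fin.last n) ≠ 0) :
    (dH H).mulVec (revVec u) = 0 ↔
      (IsHankel (Ct n u * H) ∧ IsHankel (H * Cl n (revVec u)) ∧
        Ct n u * H = H * Cl n (revVec u)) :=
  hankel_similarity_top_left_general n H hH u hun
end
end

section
/- Let n ≥ 2, let H be an invertible n×n real Hankel matrix, and let u = (u₁,…,u_{n+1}) ∈ ℝ^{n+1} with u₁ ≠ 0 and u_{n+1} ≠ 0. If the reversed vector u^J lies in the kernel of ∂H, then for every integer k, H⁻¹·C_t(u)^k·H = C_l(u^J)^k (equivalently, H⁻¹·C_b(u)^k·H = C_r(u^J)^k). -/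
open Matrix Polynomial

noncomputable section

/-!
Since `C_t(u)ᵀ = C_l(u^J)`, `C_b(u)ᵀ = C_r(u^J)` and a Hankel matrix `H` is symmetric, the
intertwining relation `C_t(u) H = H C_l(u^J)` says exactly that `C_t(u) H` is symmetric. Below its
first row, `C_t(u) H` is `H` shifted down by one row, which is symmetric by the Hankel structure;
its first row agrees with its first column because every row of `∂H` annihilates `u^J`. The bottom
companion matrix is handled in the same way through its last row. Finally, an intertwining
relation `A H = H B` with `H` invertible passes to all integer powers.
-/

namespace Matrix

theorem mul_eq_mul_transpose_of_isSymm {m R : Type*} [Fintype m] [CommSemiring R]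
    {A H : Matrix m m R} (hH : H.IsSymm) (hAH : (A * H).IsSymm) : A * H = H * Aᵀ := by
  rw [← hAH.eq, transpose_mul, hH.eq]

theorem inv_mul_zpow_mul_of_mul_eq_mul {m R : Type*} [Fintype m] [DecidableEq m] [CommRing R]
    {A B H : Matrix m m R} (hH : IsUnit H.det) (h : A * H = H * B) (k : ℤ) :
    H⁻¹ * A ^ k * H = B ^ k := by
  have hpow (p : ℕ) : H⁻¹ * A ^ p * H = B ^ p := by
    rw [Matrix.mul_assoc, ← (SemiconjBy.pow_right h.symm p).eq, ← Matrix.mul_assoc,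
      nonsing_inv_mul _ hH, Matrix.one_mul]
  cases k with
  | ofNat p => simpa using hpow p
  | negSucc p =>
    rw [zpow_negSucc, zpow_negSucc, ← hpow, mul_inv_rev, mul_inv_rev,
      nonsing_inv_nonsing_inv _ hH, Matrix.mul_assoc]

end Matrix

namespace IsHankel

variable {n : ℕ} {H : Matrix (Fin n) (Fin n) ℝ}

theorem apply_add_sub (hH : IsHankel H) (d : ℕ) (i j : Fin n) (hi : i.val + d < n)
    (hj : d ≤ j.val) : H ⟨i.val + d, hi⟩ ⟨j.val - d, by omega⟩ = H i j := by
  induction d with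
  | zero => rfl
  | succ d ih =>
    rw [← ih (by omega) (by omega)]
    convert hH ⟨i.val + d, by omega⟩ ⟨j.val - (d + 1), by omega⟩ (by dsimp only; omega)
      (by dsimp only; omega) using 2 <;> simp only [Fin.mk.injEq] <;> omega

theorem apply_eq_of_add_eq (hH : IsHankel H) {i j i' j' : Fin n}
    (h : i.val + j.val = i'.val + j'.val) : H i j = H i' j' := by
  rcases le_total i.val i'.val with hle | hle
  · rw [← hH.apply_add_sub (i'.val - i.val) i j (by omega) (by omega)]
    congr 1 <;> ext <;> dsimp only <;> omega
  · rw [← hH.apply_add_sub (i.val - i'.val) i' j' (by omega) (by omega)]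
    congr 1 <;> ext <;> dsimp only <;> omega

theorem isSymm (hH : IsHankel H) : H.IsSymm :=
  IsSymm.ext fun _ _ => hH.apply_eq_of_add_eq (add_comm _ _)

theorem dH_apply (hH : IsHankel H) (r : Fin (n - 1)) (m : Fin (n + 1)) {a b : Fin n}
    (h : a.val + b.val = r.val + m.val) : dH H r m = H a b := by
  rw [dH, of_apply]
  split <;> exact hH.apply_eq_of_add_eq (by dsimp only; omega)

end IsHankel

section Companion

variable {n : ℕ} (u : Fin (n + 1) → ℝ)

theorem Ct_transpose : (Ct n u)ᵀ = Cl n (revVec u) := by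
  ext i j
  simp only [transpose_apply, Ct, Cl, revVec, of_apply, Fin.rev_zero]
  split_ifs
  · congr 3; ext; simp only [Fin.val_rev]; omega
  all_goals rfl

theorem Cb_transpose : (Cb n u)ᵀ = Cr n (revVec u) := by
  ext i j
  simp only [transpose_apply, Cb, Cr, revVec, of_apply, Fin.rev_last]
  split_ifs
  · congr 3; ext; simp only [Fin.val_rev]; omega
  all_goals rfl

variable (M : Matrix (Fin n) (Fin n) ℝ) {i : Fin n} (j : Fin n)

theorem Ct_mul_apply_of_val_eq_zero (hi : i.val = 0) :
    (Ct n u * M) i j = -(∑ l : Fin n, u ⟨n - 1 - l.val, by omega⟩ * M l j) / u (Fin.last n) := by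
  simp only [mul_apply, Finset.sum_div, ← Finset.sum_neg_distrib, Ct, of_apply, if_pos hi]
  exact Finset.sum_congr rfl fun l _ => by ring

theorem Ct_mul_apply_of_val_ne_zero (hi : i.val ≠ 0) :
    (Ct n u * M) i j = M ⟨i.val - 1, by omega⟩ j := by
  rw [mul_apply, Finset.sum_eq_single ⟨i.val - 1, by omega⟩]
  · simp [Ct, hi, Nat.sub_add_cancel (Nat.one_le_iff_ne_zero.mpr hi)]
  · intro l _ hl
    simp only [Ct, of_apply, if_neg hi, ite_mul, one_mul, zero_mul, ite_eq_right_iff]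
    exact fun h => absurd (Fin.ext (by simp only; omega)) hl
  · simp

theorem Cb_mul_apply_of_val_eq (hi : i.val = n - 1) :
    (Cb n u * M) i j = -(∑ l : Fin n, u ⟨n - l.val, by omega⟩ * M l j) / u 0 := by
  simp only [mul_apply, Finset.sum_div, ← Finset.sum_neg_distrib, Cb, of_apply, if_pos hi]
  exact Finset.sum_congr rfl fun l _ => by ring

theorem Cb_mul_apply_of_val_ne (hi : i.val ≠ n - 1) :
    (Cb n u * M) i j = M ⟨i.val + 1, by omega⟩ j := by
  rw [mul_apply, Finset.sum_eq_single ⟨i.val + 1, by omega⟩]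
  · simp [Cb, hi]
  · intro l _ hl
    simp only [Cb, of_apply, if_neg hi, ite_mul, one_mul, zero_mul, ite_eq_right_iff]
    exact fun h => absurd (Fin.ext h) hl
  · simp

end Companion

namespace IsHankel

variable {n : ℕ} {H : Matrix (Fin n) (Fin n) ℝ} {u : Fin (n + 1) → ℝ}

theorem mul_add_sum_eq_zero_of_dH_mulVec (hH : IsHankel H) (hker : dH H *ᵥ revVec u = 0)
    {j : Fin n} (hj : j.val ≠ 0) :
    u (Fin.last n) * H ⟨j.val - 1, by omega⟩ ⟨0, by omega⟩ +
      ∑ l : Fin n, u ⟨n - 1 - l.val, by omega⟩ * H l j = 0 := by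
  refine Eq.trans ?_ (congrFun hker ⟨j.val - 1, by omega⟩)
  rw [mulVec, dotProduct, Fin.sum_univ_succ]
  congr 1
  · rw [mul_comm]
    congr 1
    exact (hH.dH_apply _ 0 rfl).symm
  · refine Finset.sum_congr rfl fun l _ => ?_
    rw [mul_comm]
    congr 1
    · exact (hH.dH_apply _ l.succ (by simp only [Fin.val_succ]; omega)).symm
    · congr 1; ext; simp only [Fin.val_rev, Fin.val_succ]; omega

theorem sum_mul_add_mul_eq_zero_of_dH_mulVec (hH : IsHankel H) (hker : dH H *ᵥ revVec u = 0)
    {j : Fin n} (hj : j.val ≠ n - 1) :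
    ∑ l : Fin n, u ⟨n - l.val, by omega⟩ * H l j +
      u 0 * H ⟨j.val + 1, by omega⟩ ⟨n - 1, by omega⟩ = 0 := by
  refine Eq.trans ?_ (congrFun hker ⟨j.val, by omega⟩)
  rw [mulVec, dotProduct, Fin.sum_univ_castSucc]
  congr 1
  · refine Finset.sum_congr rfl fun l _ => ?_
    rw [mul_comm]
    congr 1
    · exact (hH.dH_apply _ l.castSucc (by simp only [Fin.val_castSucc]; omega)).symm
    · congr 1; ext; simp only [Fin.val_rev, Fin.val_castSucc]; omega
  · rw [mul_comm]
    congr 1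
    · exact (hH.dH_apply _ (Fin.last n) (by simp only [Fin.val_last]; omega)).symm
    · simp [revVec]

theorem isSymm_Ct_mul (hH : IsHankel H) (hun : u (Fin.last n) ≠ 0)
    (hker : dH H *ᵥ revVec u = 0) : (Ct n u * H).IsSymm := by
  have top_row (i j : Fin n) (hi : i.val = 0) (hj : j.val ≠ 0) :
      (Ct n u * H) i j = (Ct n u * H) j i := by
    obtain rfl : i = ⟨0, j.pos⟩ := Fin.ext hi
    rw [Ct_mul_apply_of_val_eq_zero u H j hi, Ct_mul_apply_of_val_ne_zero u H _ hj, div_eq_iff hun]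
    linear_combination -hH.mul_add_sum_eq_zero_of_dH_mulVec hker hj
  refine IsSymm.ext fun i j => ?_
  by_cases hi : i.val = 0 <;> by_cases hj : j.val = 0
  · rw [Fin.ext (hi.trans hj.symm)]
  · exact (top_row i j hi hj).symm
  · exact top_row j i hj hi
  · rw [Ct_mul_apply_of_val_ne_zero u H i hj, Ct_mul_apply_of_val_ne_zero u H j hi]
    exact hH.apply_eq_of_add_eq (by simp only; omega)

theorem isSymm_Cb_mul (hH : IsHankel H) (hu1 : u 0 ≠ 0)
    (hker : dH H *ᵥ revVec u = 0) : (Cb n u * H).IsSymm := by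
  have bottom_row (i j : Fin n) (hi : i.val = n - 1) (hj : j.val ≠ n - 1) :
      (Cb n u * H) i j = (Cb n u * H) j i := by
    obtain rfl : i = ⟨n - 1, Nat.sub_lt j.pos Nat.one_pos⟩ := Fin.ext hi
    rw [Cb_mul_apply_of_val_eq u H j hi, Cb_mul_apply_of_val_ne u H _ hj, div_eq_iff hu1]
    linear_combination -hH.sum_mul_add_mul_eq_zero_of_dH_mulVec hker hj
  refine IsSymm.ext fun i j => ?_
  by_cases hi : i.val = n - 1 <;> by_cases hj : j.val = n - 1
  · rw [Fin.ext (hi.trans hj.symm)]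
  · exact (bottom_row i j hi hj).symm
  · exact bottom_row j i hj hi
  · rw [Cb_mul_apply_of_val_ne u H i hj, Cb_mul_apply_of_val_ne u H j hi]
    exact hH.apply_eq_of_add_eq (by simp only; omega)

end IsHankel

theorem hankel_similarity_all_powers_general
    (n : ℕ) (H : Matrix (Fin n) (Fin n) ℝ)
    (hHinv : IsUnit H.det) (hH : IsHankel H)
    (u : Fin (n + 1) → ℝ) (hu1 : u 0 ≠ 0) (hun : u (Fin.last n) ≠ 0)
    (hker : (dH H).mulVec (revVec u) = 0) :
    ∀ k : ℤ, H⁻¹ * Ct n u ^ k * H = Cl n (revVec u) ^ k ∧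
      H⁻¹ * Cb n u ^ k * H = Cr n (revVec u) ^ k := by
  intro k
  rw [← Ct_transpose, ← Cb_transpose]
  exact ⟨inv_mul_zpow_mul_of_mul_eq_mul hHinv
      (mul_eq_mul_transpose_of_isSymm hH.isSymm (hH.isSymm_Ct_mul hun hker)) k,
    inv_mul_zpow_mul_of_mul_eq_mul hHinv
      (mul_eq_mul_transpose_of_isSymm hH.isSymm (hH.isSymm_Cb_mul hu1 hker)) k⟩

/-- If `u^J ∈ ker ∂H` for an invertible Hankel `H`, then for every integer `k`,
`H⁻¹ C_t(u)^k H = C_l(u^J)^k` and `H⁻¹ C_b(u)^k H = C_r(u^J)^k`. -/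
theorem hankel_similarity_all_powers
    (n : ℕ) (hn : 2 ≤ n) (H : Matrix (Fin n) (Fin n) ℝ)
    (hHinv : IsUnit H.det) (hH : IsHankel H)
    (u : Fin (n + 1) → ℝ) (hu1 : u 0 ≠ 0) (hun : u (Fin.last n) ≠ 0)
    (hker : (dH H).mulVec (revVec u) = 0) :
    ∀ k : ℤ, H⁻¹ * Ct n u ^ k * H = Cl n (revVec u) ^ k ∧
      H⁻¹ * Cb n u ^ k * H = Cr n (revVec u) ^ k :=
  hankel_similarity_all_powers_general n H hHinv hH u hu1 hun hker
end
end

section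
/- Let n ≥ 2 and let a, b, a₁, b₁ ∈ ℝ^{n+1} be vectors such that the Toeplitz Bezoutians B_T(a,b) and B_T(a₁,b₁) are both nonzero matrices. Then B_T(a₁,b₁) = B_T(a,b) if and only if there exists a 2×2 real matrix φ with det φ = 1 such that a₁ = φ₁₁·a + φ₂₁·b and b₁ = φ₁₂·a + φ₂₂·b (i.e. [a₁ b₁] = [a b]·φ as (n+1)×2 matrices). -/
/-!
Entry `(i, j)` of `B_T(u, v)` is the sum of the minors `u_p v_q - v_p u_q` along the diagonal
`(p, q) = (i - k, n - j + k)`, `0 ≤ k ≤ min i j`. This triangular system shows that `B_T(u, v)`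
determines, and is determined by, the alternating matrix `u ∧ v` of all these minors. Two pairs
with the same nonzero `u ∧ v` span the same plane, so by Cramer's rule `(u₁, v₁) = (u, v) φ`; and
`φ` has determinant `1` because `(u, v) φ` has wedge `det φ • (u ∧ v)`.
-/

open Matrix Polynomial

noncomputable section

open Finset

section Wedge

variable {ι R : Type*} [CommRing R]

def wedge (u v : ι → R) : Matrix ι ι R :=
  vecMulVec u v - vecMulVec v u

theorem wedge_apply (u v : ι → R) (p q : ι) : wedge u v p q = u p * v q - v p * u q := by
  simp [wedge, vecMulVec_apply]

theorem wedge_apply_swap (u v : ι → R) (p q : ι) : wedge u v q p = -wedge u v p q := by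
  simp only [wedge_apply]; ring

theorem wedge_apply_self (u v : ι → R) (p : ι) : wedge u v p p = 0 := by
  simp only [wedge_apply]; ring

@[simp]
theorem wedge_zero : wedge (0 : ι → R) 0 = 0 := by
  simp [wedge]

theorem wedge_neg_swap (u v : ι → R) : wedge v (-u) = wedge u v := by
  ext p q; simp only [wedge_apply, Pi.neg_apply]; ring

theorem wedge_smul_add_smul (u v : ι → R) (φ : Matrix (Fin 2) (Fin 2) R) :
    wedge (φ 0 0 • u + φ 1 0 • v) (φ 0 1 • u + φ 1 1 • v) = φ.det • wedge u v := by
  ext p q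
  simp only [wedge_apply, det_fin_two, Pi.add_apply, Pi.smul_apply, Matrix.smul_apply,
    smul_eq_mul]
  ring

theorem wedge_eq_wedge_of_apply_eq {n : ℕ} {u v u' v' : Fin (n + 1) → R}
    (h : ∀ p q : Fin (n + 1), (p : ℕ) < n → 0 < (q : ℕ) → wedge u v p q = wedge u' v' p q) :
    wedge u v = wedge u' v' := by
  ext p q
  by_cases hpq : (p : ℕ) < n ∧ 0 < (q : ℕ)
  · exact h p q hpq.1 hpq.2
  by_cases hqp : (q : ℕ) < n ∧ 0 < (p : ℕ)
  · rw [← neg_inj, ← wedge_apply_swap, ← wedge_apply_swap, h q p hqp.1 hqp.2]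
  obtain rfl : p = q := by omega
  rw [wedge_apply_self, wedge_apply_self]

end Wedge

section Cramer

variable {ι K : Type*} [Field K] {u v : ι → K}

/-- `x ∧ y = u ∧ v ≠ 0` puts `x` in the span of `u` and `v`; the coefficients are those of
Cramer's rule. -/
theorem eq_smul_add_smul_of_wedge_eq {x y : ι → K} {p q : ι} (h : wedge x y = wedge u v)
    (hpq : wedge u v p q ≠ 0) :
    x = (wedge x v p q / wedge u v p q) • u + (wedge u x p q / wedge u v p q) • v := by
  funext r
  have key : x r * wedge u v p q = x p * wedge u v r q - x q * wedge u v r p := by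
    rw [← h]; simp only [wedge_apply]; ring
  simp only [Pi.add_apply, Pi.smul_apply, smul_eq_mul]
  field_simp
  simp only [wedge_apply] at key ⊢
  linear_combination key

theorem wedge_eq_wedge_iff {u₁ v₁ : ι → K} (huv : wedge u v ≠ 0) :
    wedge u₁ v₁ = wedge u v ↔
      ∃ φ : Matrix (Fin 2) (Fin 2) K, φ.det = 1 ∧
        u₁ = φ 0 0 • u + φ 1 0 • v ∧ v₁ = φ 0 1 • u + φ 1 1 • v := by
  constructor
  · intro h
    obtain ⟨p, q, hpq⟩ : ∃ p q, wedge u v p q ≠ 0 := by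
      by_contra! h0
      exact huv (Matrix.ext h0)
    set D := wedge u v p q
    obtain ⟨φ, hu₁, hv₁⟩ : ∃ φ : Matrix (Fin 2) (Fin 2) K,
        u₁ = φ 0 0 • u + φ 1 0 • v ∧ v₁ = φ 0 1 • u + φ 1 1 • v :=
      ⟨!![wedge u₁ v p q / D, wedge v₁ v p q / D; wedge u u₁ p q / D, wedge u v₁ p q / D],
        eq_smul_add_smul_of_wedge_eq h hpq,
        eq_smul_add_smul_of_wedge_eq ((wedge_neg_swap u₁ v₁).trans h) hpq⟩
    refine ⟨φ, smul_left_injective K huv ?_, hu₁, hv₁⟩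
    change φ.det • wedge u v = (1 : K) • wedge u v
    rw [← wedge_smul_add_smul, ← hu₁, ← hv₁, h, one_smul]
  · rintro ⟨φ, hφ, rfl, rfl⟩
    rw [wedge_smul_add_smul, hφ, one_smul]

end Cramer

/-- Makes the diagonal indices in `BT_apply` plain natural numbers, free of bound proofs. -/
def extendByZero {R : Type*} [Zero R] {m : ℕ} (u : Fin m → R) (p : ℕ) : R :=
  if h : p < m then u ⟨p, h⟩ else 0

theorem wedge_extendByZero_apply {R : Type*} [CommRing R] {m : ℕ} (u v : Fin m → R)
    (p q : Fin m) : wedge (extendByZero u) (extendByZero v) p q = wedge u v p q := by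
  simp [wedge_apply, extendByZero]

theorem eq_zero_of_sum_range_min_eq_zero {M : Type*} [AddCommMonoid M] {n : ℕ} {g : ℕ → ℕ → M}
    (h : ∀ i < n, ∀ j < n, ∑ k ∈ range (min i j + 1), g (i - k) (j - k) = 0)
    {i j : ℕ} (hi : i < n) (hj : j < n) : g i j = 0 := by
  rcases i with _ | i
  · simpa using h 0 hi j hj
  rcases j with _ | j
  · simpa using h _ hi 0 hj
  -- diagonal sum at `(i + 1, j + 1)` = `g (i + 1) (j + 1)` + diagonal sum at `(i, j)`
  have hsum := h (i + 1) hi (j + 1) hj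
  rw [Nat.add_min_add_right, sum_range_succ', Nat.sub_zero, Nat.sub_zero] at hsum
  simp only [Nat.add_sub_add_right] at hsum
  rwa [h i (by omega) j (by omega), zero_add] at hsum

theorem BT_apply (n : ℕ) (u v : Fin (n + 1) → ℝ) (i j : Fin n) :
    BT n u v i j = ∑ k ∈ range (min (i : ℕ) j + 1),
      wedge (extendByZero u) (extendByZero v) (i - k) (n - (j - k)) := by
  have hle : min (i : ℕ) j + 1 ≤ n := by omega
  rw [← inter_eq_right.2 (range_subset_range.2 hle), ← sum_ite_mem, ← Fin.sum_univ_eq_sum_range,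
    BT, Matrix.sub_apply, mul_apply, mul_apply, ← sum_sub_distrib]
  refine sum_congr rfl fun k _ => ?_
  simp only [Uplus, Uminus, of_apply, mem_range, wedge_apply, extendByZero]
  split_ifs <;> first
    | (exfalso; omega)
    | simp only [mul_zero, zero_mul, sub_self]
    | simp only [show n + (k : ℕ) - j = n - (j - k) by omega]

theorem BT_eq_BT_iff {n : ℕ} {u v u' v' : Fin (n + 1) → ℝ} :
    BT n u v = BT n u' v' ↔ wedge u v = wedge u' v' := by
  constructor
  · intro h
    refine wedge_eq_wedge_of_apply_eq fun p q hp hq => ?_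
    have hdiag := eq_zero_of_sum_range_min_eq_zero
      (g := fun i j => wedge (extendByZero u) (extendByZero v) i (n - j)
        - wedge (extendByZero u') (extendByZero v') i (n - j))
      (fun i hi j hj => by
        have hij := congrFun (congrFun h ⟨i, hi⟩) ⟨j, hj⟩
        rw [BT_apply, BT_apply, ← sub_eq_zero, ← sum_sub_distrib] at hij
        exact hij)
      hp (show n - q < n by omega)
    rwa [sub_eq_zero, Nat.sub_sub_self q.is_le, wedge_extendByZero_apply,
      wedge_extendByZero_apply] at hdiag
  · intro h
    ext i j
    rw [BT_apply, BT_apply]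
    refine sum_congr rfl fun k hk => ?_
    have hk' := mem_range.1 hk
    have hpq := congrFun (congrFun h ⟨i - k, by omega⟩) ⟨n - (j - k), by omega⟩
    rwa [← wedge_extendByZero_apply, ← wedge_extendByZero_apply] at hpq

theorem toeplitz_bezoutian_coincide_general
    (n : ℕ) (a b a₁ b₁ : Fin (n + 1) → ℝ)
    (hab : BT n a b ≠ 0) :
    BT n a₁ b₁ = BT n a b ↔
      ∃ φ : Matrix (Fin 2) (Fin 2) ℝ, φ.det = 1 ∧
        a₁ = φ 0 0 • a + φ 1 0 • b ∧ b₁ = φ 0 1 • a + φ 1 1 • b := by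
  have hw : wedge a b ≠ 0 := fun h =>
    hab <| (BT_eq_BT_iff.2 (h.trans wedge_zero.symm)).trans (sub_self _)
  rw [BT_eq_BT_iff]
  exact wedge_eq_wedge_iff hw

/-- Two nonzero Toeplitz Bezoutians coincide iff the generating pairs of vectors differ
by a `2×2` matrix `φ` of determinant `1`. -/
theorem toeplitz_bezoutian_coincide
    (n : ℕ) (hn : 2 ≤ n) (a b a₁ b₁ : Fin (n + 1) → ℝ)
    (hab : BT n a b ≠ 0) (hab₁ : BT n a₁ b₁ ≠ 0) :
    BT n a₁ b₁ = BT n a b ↔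
      ∃ φ : Matrix (Fin 2) (Fin 2) ℝ, φ.det = 1 ∧
        a₁ = φ 0 0 • a + φ 1 0 • b ∧ b₁ = φ 0 1 • a + φ 1 1 • b :=
  toeplitz_bezoutian_coincide_general n a b a₁ b₁ hab
end
end

section
/- Let n ≥ 2 and let u, v ∈ ℝ^{n+1} with u₁, u_{n+1}, v₁, v_{n+1} all nonzero, and suppose the associated polynomials u(λ) = u₁ + u₂λ + ⋯ + u_{n+1}λⁿ and v(λ) = v₁ + v₂λ + ⋯ + v_{n+1}λⁿ are coprime in ℝ[λ]. Then the Toeplitz Bezoutian B_T(u,v) is invertible, and for every integer k, B_T(u,v)·C_t(u)^k·B_T(u,v)⁻¹ = C_r(u)^k and B_T(u,v)·C_t(v)^k·B_T(u,v)⁻¹ = C_r(v)^k. -/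
open Matrix Polynomial

noncomputable section

/-!
Barnett factorization: `B_T(u, v) = -U₋(u) · v(C_t(u))`. Both sides are linear in `v`, and for
the unit vector `e_m` the identity `B_T(u, e_m) = -U₋(u) C_t(u)^m` follows by induction on `m`
from an entrywise computation. Taking `v = u` gives `u(C_t(u)) = 0`, because `U₋(u)` is
triangular with diagonal `u_{n+1} ≠ 0`; by coprimality `v(C_t(u))` is then invertible, hence so
is `B_T(u, v)`. Since `U₋(u) C_t(u) = C_r(u) U₋(u)` and `v(C_t(u))` commutes with `C_t(u)`, the
Bezoutian intertwines `C_t(u)` with `C_r(u)`; the statement for `v` follows from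
`B_T(u, v) = -B_T(v, u)`. Finally `C_t(u)` is invertible because the relation `u(C_t(u)) = 0`
has constant term `u₁ ≠ 0`, so the similarity extends to integer powers.
-/

lemma Fin.sum_ite_intCast_eq {M : Type*} [AddCommMonoid M] {n : ℕ} (t : ℤ) (f : ℤ → M) :
    ∑ k : Fin n, (if (k : ℤ) = t then f k else 0) = if 0 ≤ t ∧ t < n then f t else 0 := by
  split_ifs with ht
  · have hk : ((⟨t.toNat, by omega⟩ : Fin n) : ℤ) = t := by simp; omega
    rw [Finset.sum_eq_single ⟨t.toNat, by omega⟩, if_pos hk, hk]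
    · intro k _ hne
      exact if_neg fun h => hne (Fin.ext (by omega))
    · simp
  · exact Finset.sum_eq_zero fun k _ => if_neg (by omega)

lemma isUnit_aeval_of_isCoprime {R A : Type*} [CommRing R] [Ring A] [Algebra R A] {p q : R[X]}
    (h : IsCoprime p q) {a : A} (hp : aeval a p = 0) : IsUnit (aeval a q) := by
  obtain ⟨r, s, hrs⟩ := h
  have hs : aeval a s * aeval a q = 1 := by
    simpa [hp] using congrArg (aeval a) hrs
  refine isUnit_iff_exists.mpr ⟨aeval a s, ?_, hs⟩
  rwa [← map_mul, mul_comm, map_mul]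

lemma Matrix.mul_zpow_mul_inv_of_mul_eq {ι R : Type*} [Fintype ι] [DecidableEq ι] [CommRing R]
    {B X Y : Matrix ι ι R} (hB : IsUnit B.det) (hX : IsUnit X.det) (h : B * X = Y * B) (k : ℤ) :
    B * X ^ k * B⁻¹ = Y ^ k := by
  have hY : IsUnit Y.det := by
    have hconj : B * X * B⁻¹ = Y := by
      rw [h, Matrix.mul_assoc, mul_nonsing_inv _ hB, Matrix.mul_one]
    rwa [← hconj, det_conj ((isUnit_iff_isUnit_det B).mpr hB)]
  rw [(SemiconjBy.zpow_right hX hY h k).eq, Matrix.mul_assoc, mul_nonsing_inv _ hB,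
    Matrix.mul_one]

lemma aeval_polyOf {A : Type*} [Semiring A] [Algebra ℝ A] {m : ℕ} (v : Fin m → ℝ) (a : A) :
    aeval a (polyOf v) = ∑ i, v i • a ^ (i : ℕ) := by
  simp [polyOf, Algebra.smul_def]

/-- Extended by zero to `ℤ`, the coefficients give the entries of `U₊(u)` and `U₋(u)` as
`coeffInt u (i - j)` and `coeffInt u (n + i - j)`, with no side conditions on the indices. -/
def coeffInt {n : ℕ} (u : Fin (n + 1) → ℝ) (t : ℤ) : ℝ :=
  if h : 0 ≤ t ∧ t ≤ n then u ⟨t.toNat, by omega⟩ else 0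

section ToeplitzBezoutian

variable {n : ℕ} (u : Fin (n + 1) → ℝ)

lemma coeffInt_eq_zero {t : ℤ} (ht : t < 0 ∨ n < t) : coeffInt u t = 0 :=
  dif_neg (by omega)

lemma coeffInt_of_eq {t : ℤ} (k : Fin (n + 1)) (h : t = k) : coeffInt u t = u k := by
  rw [coeffInt, dif_pos (by omega)]
  congr
  omega

lemma coeffInt_last : coeffInt u n = u (Fin.last n) :=
  coeffInt_of_eq u _ (by simp)

lemma coeffInt_single (m : Fin (n + 1)) (t : ℤ) :
    coeffInt (Pi.single m 1) t = if t = m then 1 else 0 := by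
  unfold coeffInt
  split_ifs <;> first | omega | rfl | (simp [Pi.single_apply, Fin.ext_iff]; omega)

lemma coeffInt_eq_sum (v : Fin (n + 1) → ℝ) (t : ℤ) :
    coeffInt v t = ∑ m, v m * coeffInt (Pi.single m 1) t := by
  have hterm : ∀ m : Fin (n + 1), v m * coeffInt (Pi.single m 1) t =
      if (m : ℤ) = t then coeffInt v m else 0 := fun m => by
    rw [coeffInt_single, coeffInt_of_eq v m rfl]
    split_ifs <;> first | omega | simp
  rw [Finset.sum_congr rfl fun m _ => hterm m, Fin.sum_ite_intCast_eq]
  split_ifs with ht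
  · rfl
  · exact coeffInt_eq_zero v (by omega)

lemma Uplus_apply (i j : Fin n) : Uplus n u i j = coeffInt u ((i : ℤ) - j) := by
  simp only [Uplus, of_apply]
  split_ifs
  · exact (coeffInt_of_eq u _ (by simp; omega)).symm
  · exact (coeffInt_eq_zero u (by omega)).symm

lemma Uminus_apply (i j : Fin n) : Uminus n u i j = coeffInt u (n + (i : ℤ) - j) := by
  simp only [Uminus, of_apply]
  split_ifs
  · exact (coeffInt_of_eq u _ (by simp; omega)).symm
  · exact (coeffInt_eq_zero u (by omega)).symm

lemma Ct_apply (i j : Fin n) :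
    Ct n u i j = (if (i : ℤ) = 0 then -coeffInt u ((n : ℤ) - 1 - j) / coeffInt u n else 0) +
      if (i : ℤ) = j + 1 then 1 else 0 := by
  simp only [Ct, of_apply]
  rw [coeffInt_last, coeffInt_of_eq u ⟨n - 1 - j, by omega⟩ (by simp; omega)]
  split_ifs <;> first | omega | simp

lemma Cr_apply (i j : Fin n) :
    Cr n u i j = (if (j : ℤ) = n - 1 then -coeffInt u i / coeffInt u n else 0) +
      if (i : ℤ) = j + 1 then 1 else 0 := by
  simp only [Cr, of_apply]
  rw [coeffInt_last, coeffInt_of_eq u ⟨i, by omega⟩ rfl]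
  split_ifs <;> first | omega | simp

lemma Uplus_eq_sum (v : Fin (n + 1) → ℝ) :
    Uplus n v = ∑ m, v m • Uplus n (Pi.single m 1) := by
  ext i j
  simp only [Matrix.sum_apply, Matrix.smul_apply, smul_eq_mul, Uplus_apply]
  exact coeffInt_eq_sum v _

lemma Uminus_eq_sum (v : Fin (n + 1) → ℝ) :
    Uminus n v = ∑ m, v m • Uminus n (Pi.single m 1) := by
  ext i j
  simp only [Matrix.sum_apply, Matrix.smul_apply, smul_eq_mul, Uminus_apply]
  exact coeffInt_eq_sum v _

lemma mul_Ct_apply {M : Matrix (Fin n) (Fin n) ℝ} {f : ℤ → ℤ → ℝ}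
    (hM : ∀ i j : Fin n, M i j = f i j) (i j : Fin n) :
    (M * Ct n u) i j = f i 0 * (-coeffInt u ((n : ℤ) - 1 - j) / coeffInt u n) +
      if (j : ℤ) + 1 < n then f i (j + 1) else 0 := by
  simp only [mul_apply, Ct_apply, hM, mul_add, mul_ite, mul_zero, mul_one, Finset.sum_add_distrib]
  have := j.pos
  rw [Fin.sum_ite_intCast_eq 0 (fun t => f i t * _), Fin.sum_ite_intCast_eq _ (f i),
    if_pos (by omega)]
  exact congrArg _ (if_congr (by omega) rfl rfl)

lemma Cr_mul_apply {M : Matrix (Fin n) (Fin n) ℝ} {f : ℤ → ℤ → ℝ}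
    (hM : ∀ i j : Fin n, M i j = f i j) (i j : Fin n) :
    (Cr n u * M) i j = -coeffInt u i / coeffInt u n * f (n - 1) j +
      if 0 < (i : ℤ) then f (i - 1) j else 0 := by
  simp only [mul_apply, Cr_apply, hM, add_mul, ite_mul, one_mul, zero_mul, Finset.sum_add_distrib]
  have hshift : ∀ k : Fin n, (if (i : ℤ) = k + 1 then f k j else 0) =
      if (k : ℤ) = i - 1 then f (i - 1) j else 0 := fun k => by
    split_ifs with h₁ h₂ <;> first | omega | rfl | rw [h₂]
  have := i.pos
  rw [Fin.sum_ite_intCast_eq (n - 1) (fun t => _ * f t j),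
    Finset.sum_congr rfl fun k _ => hshift k, Fin.sum_ite_intCast_eq _ (fun _ => f (i - 1) j),
    if_pos (by omega)]
  exact congrArg _ (if_congr (by omega) rfl rfl)

lemma isUnit_det_Uminus (hun : u (Fin.last n) ≠ 0) : IsUnit (Uminus n u).det := by
  have htri : (Uminus n u).IsUpperTriangular := fun i j hji => by
    rw [Uminus_apply, coeffInt_eq_zero u (by simp at hji; omega)]
  rw [det_of_isUpperTriangular htri]
  simp [Uminus_apply, coeffInt_last, hun]

lemma Cr_mul_Uminus (hun : u (Fin.last n) ≠ 0) :
    Cr n u * Uminus n u = Uminus n u * Ct n u := by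
  ext i j
  have hn : coeffInt u n ≠ 0 := by rwa [coeffInt_last]
  rw [Cr_mul_apply u (f := fun a b => coeffInt u (n + a - b)) (Uminus_apply u),
    mul_Ct_apply u (f := fun a b => coeffInt u (n + a - b)) (Uminus_apply u)]
  have := j.isLt
  rcases (i : ℕ).eq_zero_or_pos with hi | hi <;>
    rcases (Nat.lt_or_ge ((j : ℕ) + 1) n) with hj | hj <;>
    simp (disch := omega) only [coeffInt_eq_zero, if_pos, if_neg, mul_zero, zero_mul, add_zero,
      zero_add]
  · rw [show ((i : ℕ) : ℤ) = 0 by omega]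
    field_simp
    ring_nf
  · rw [show ((i : ℕ) : ℤ) = 0 by omega, show ((j : ℕ) : ℤ) = n - 1 by omega]
    field_simp
    ring_nf
  · ring_nf
  · rw [show ((j : ℕ) : ℤ) = n - 1 by omega]
    field_simp
    ring_nf

lemma BT_single_apply (m : Fin (n + 1)) (i j : Fin n) :
    BT n u (Pi.single m 1) i j =
      ((if (n : ℤ) ≤ m + j then 1 else 0) - if (m : ℤ) ≤ i then 1 else 0) *
        coeffInt u (n - m + i - j) := by
  have hleft : ∀ k : Fin n, Uplus n u i k * Uminus n (Pi.single m 1) k j =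
      if (k : ℤ) = m + j - n then coeffInt u (i - (m + j - n)) else 0 := fun k => by
    rw [Uplus_apply, Uminus_apply, coeffInt_single]
    split_ifs <;> first | omega | (simp only [mul_one]; congr 1; omega) | simp
  have hright : ∀ k : Fin n, Uplus n (Pi.single m 1) i k * Uminus n u k j =
      if (k : ℤ) = i - m then coeffInt u (n + (i - m) - j) else 0 := fun k => by
    rw [Uplus_apply, Uminus_apply, coeffInt_single]
    split_ifs <;> first | omega | (simp only [one_mul]; congr 1; omega) | simp
  have := m.isLt
  rw [BT, Matrix.sub_apply, mul_apply, mul_apply, Finset.sum_congr rfl fun k _ => hleft k,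
    Finset.sum_congr rfl fun k _ => hright k, Fin.sum_ite_intCast_eq _ (fun _ => _),
    Fin.sum_ite_intCast_eq _ (fun _ => _), sub_mul]
  congr 1 <;> split_ifs <;> first | omega | (simp only [one_mul]; congr 1; ring) | simp

lemma BT_single_zero : BT n u (Pi.single 0 1) = -Uminus n u := by
  ext i j
  have := j.isLt
  rw [BT_single_apply, neg_apply, Uminus_apply]
  simp (disch := omega) only [Fin.val_zero, Nat.cast_zero, if_pos, if_neg]
  ring_nf

lemma BT_single_succ (hun : u (Fin.last n) ≠ 0) (m : Fin n) :
    BT n u (Pi.single m.succ 1) = BT n u (Pi.single m.castSucc 1) * Ct n u := by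
  ext i j
  have hn : coeffInt u n ≠ 0 := by rwa [coeffInt_last]
  rw [BT_single_apply, mul_Ct_apply u (f := fun a b =>
    ((if (n : ℤ) ≤ (m : ℕ) + b then 1 else 0) - if ((m : ℕ) : ℤ) ≤ a then 1 else 0) *
      coeffInt u (n - (m : ℕ) + a - b)) (BT_single_apply u m.castSucc)]
  simp only [Fin.val_succ, Nat.cast_add, Nat.cast_one]
  have := j.isLt
  rcases lt_trichotomy (i : ℕ) m with hi | hi | hi <;>
    rcases (Nat.lt_or_ge ((j : ℕ) + 1) n) with hj | hj <;>
    simp (disch := omega) only [coeffInt_eq_zero, if_pos, if_neg, mul_zero, zero_mul, add_zero,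
      zero_add, sub_zero, zero_sub]
  · ring_nf
  · rw [show ((i : ℕ) : ℤ) = m by omega]
    field_simp
    ring_nf
  · rw [show ((i : ℕ) : ℤ) = m by omega]
    field_simp
    ring_nf
  · ring_nf
  · ring

lemma BT_single_eq (hun : u (Fin.last n) ≠ 0) (m : Fin (n + 1)) :
    BT n u (Pi.single m 1) = -(Uminus n u * Ct n u ^ (m : ℕ)) := by
  induction m using Fin.induction with
  | zero => simp [BT_single_zero]
  | succ m ih => rw [BT_single_succ u hun, ih, Fin.val_succ, pow_succ, neg_mul, Matrix.mul_assoc,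
      Fin.val_castSucc]

lemma BT_eq_sum_single (v : Fin (n + 1) → ℝ) :
    BT n u v = ∑ m, v m • BT n u (Pi.single m 1) := by
  rw [BT, Uplus_eq_sum v, Uminus_eq_sum v]
  simp only [BT, Matrix.mul_sum, Matrix.sum_mul, Matrix.mul_smul, Matrix.smul_mul, smul_sub,
    Finset.sum_sub_distrib]

lemma BT_eq_neg_Uminus_mul_aeval (hun : u (Fin.last n) ≠ 0) (v : Fin (n + 1) → ℝ) :
    BT n u v = -(Uminus n u * aeval (Ct n u) (polyOf v)) := by
  simp only [BT_eq_sum_single u v, BT_single_eq u hun, aeval_polyOf, Matrix.mul_sum,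
    Matrix.mul_smul, smul_neg, Finset.sum_neg_distrib]

lemma aeval_Ct_polyOf_self (hun : u (Fin.last n) ≠ 0) : aeval (Ct n u) (polyOf u) = 0 := by
  have h := BT_eq_neg_Uminus_mul_aeval u hun u
  rw [BT, sub_self, eq_comm, neg_eq_zero] at h
  simpa [← Matrix.mul_assoc, nonsing_inv_mul _ (isUnit_det_Uminus u hun)] using
    congrArg ((Uminus n u)⁻¹ * ·) h

lemma isUnit_det_Ct (hu0 : u 0 ≠ 0) (hun : u (Fin.last n) ≠ 0) : IsUnit (Ct n u).det := by
  have h := aeval_Ct_polyOf_self u hun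
  have hcoeff : (polyOf u).coeff 0 = u 0 := by
    simp [polyOf, Fin.sum_univ_succ]
  rw [← X_mul_divX_add (polyOf u), hcoeff, map_add, map_mul, aeval_X, aeval_C,
    Algebra.algebraMap_eq_smul_one, add_eq_zero_iff_eq_neg] at h
  refine isUnit_det_of_right_inverse (B := -(u 0)⁻¹ • aeval (Ct n u) (polyOf u).divX) ?_
  rw [Matrix.mul_smul, h, smul_neg, neg_smul, neg_neg, smul_smul, inv_mul_cancel₀ hu0, one_smul]

lemma BT_mul_Ct (hun : u (Fin.last n) ≠ 0) (v : Fin (n + 1) → ℝ) :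
    BT n u v * Ct n u = Cr n u * BT n u v := by
  have hcomm : aeval (Ct n u) (polyOf v) * Ct n u = Ct n u * aeval (Ct n u) (polyOf v) := by
    simpa using congrArg (aeval (Ct n u)) (mul_comm (polyOf v) X)
  rw [BT_eq_neg_Uminus_mul_aeval u hun, neg_mul, Matrix.mul_assoc, hcomm, ← Matrix.mul_assoc,
    ← Cr_mul_Uminus u hun, Matrix.mul_assoc, mul_neg]

lemma isUnit_det_BT (hun : u (Fin.last n) ≠ 0) {v : Fin (n + 1) → ℝ}
    (hcop : IsCoprime (polyOf u) (polyOf v)) : IsUnit (BT n u v).det := by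
  have hv := isUnit_aeval_of_isCoprime hcop (aeval_Ct_polyOf_self u hun)
  rw [BT_eq_neg_Uminus_mul_aeval u hun, det_neg, det_mul]
  exact (isUnit_one.neg.pow _).mul
    ((isUnit_det_Uminus u hun).mul ((isUnit_iff_isUnit_det _).mp hv))

end ToeplitzBezoutian

theorem toeplitz_bezoutian_similarity_general
    (n : ℕ) (u v : Fin (n + 1) → ℝ)
    (hu1 : u 0 ≠ 0) (hun : u (Fin.last n) ≠ 0)
    (hv1 : v 0 ≠ 0) (hvn : v (Fin.last n) ≠ 0)
    (hcop : IsCoprime (polyOf u) (polyOf v)) :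
    IsUnit (BT n u v).det ∧
      ∀ k : ℤ, BT n u v * Ct n u ^ k * (BT n u v)⁻¹ = Cr n u ^ k ∧
        BT n u v * Ct n v ^ k * (BT n u v)⁻¹ = Cr n v ^ k := by
  have hB := isUnit_det_BT u hun hcop
  have hBv : BT n u v * Ct n v = Cr n v * BT n u v := by
    rw [show BT n u v = -BT n v u from (neg_sub _ _).symm, neg_mul, BT_mul_Ct v hvn, mul_neg]
  exact ⟨hB, fun k =>
    ⟨mul_zpow_mul_inv_of_mul_eq hB (isUnit_det_Ct u hu1 hun) (BT_mul_Ct u hun v) k,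
      mul_zpow_mul_inv_of_mul_eq hB (isUnit_det_Ct v hv1 hvn) hBv k⟩⟩

/-- For coprime `u(λ)`, `v(λ)` the Toeplitz Bezoutian is invertible and conjugates
`C_t(u)^k` to `C_r(u)^k` and `C_t(v)^k` to `C_r(v)^k` for all integers `k`. -/
theorem toeplitz_bezoutian_similarity
    (n : ℕ) (hn : 2 ≤ n) (u v : Fin (n + 1) → ℝ)
    (hu1 : u 0 ≠ 0) (hun : u (Fin.last n) ≠ 0)
    (hv1 : v 0 ≠ 0) (hvn : v (Fin.last n) ≠ 0)
    (hcop : IsCoprime (polyOf u) (polyOf v)) :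
    IsUnit (BT n u v).det ∧
      ∀ k : ℤ, BT n u v * Ct n u ^ k * (BT n u v)⁻¹ = Cr n u ^ k ∧
        BT n u v * Ct n v ^ k * (BT n u v)⁻¹ = Cr n v ^ k :=
  toeplitz_bezoutian_similarity_general n u v hu1 hun hv1 hvn hcop
end
end

section
/- Let n ≥ 2, let u = (u₁,…,u_{n+1}) ∈ ℝ^{n+1} with u₁ ≠ 0 and u_{n+1} ≠ 0, let A be an invertible n×n real matrix, and let s ≥ t be integers with r = s − t > 0. Let M be the n×(n+r) real matrix whose first n columns form the matrix A·C_r(u^J)^t and whose (n+i)-th column, for each 1 ≤ i ≤ r, equals the last column of A·C_r(u^J)^{t+i}. Then M has rank n, and the vectors e₁^J,…,e_r^J form a basis of the kernel of M, where e_i^J ∈ ℝ^{n+r} is the vector with (e_i^J)_{(r−i)+m} = u_{n+2−m} for 1 ≤ m ≤ n+1 and all other entries zero (so e_i^J carries the reversed block (u_{n+1},…,u₁) preceded by r−i zeros and followed by i−1 zeros). -/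
open Matrix Polynomial

noncomputable section

/-!
Write `C = C_r(u^J)` and `e` for the first standard basis vector. Since `Cᵏ e` is the `k`-th
basis vector for `k < n`, every column of `M` has the form `A Cᵗ C^q e`, i.e. `M = A Cᵗ K` with `K`
the Krylov matrix of `(C, e)`. The companion relation `∑ₘ (u^J)ₘ Cᵐ e = 0` places every shift of
`u^J` in the kernel of `K`, hence of `M`. These `r` shifts are linearly independent (they are
triangular with pivot `u_{n+1} ≠ 0`), the leading `n × n` block `A Cᵗ` of `M` is invertible, so
`rank M = n`, and counting dimensions shows that the shifts span the kernel.
-/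

def shiftVec {R : Type*} [Zero R] {d : ℕ} (v : Fin (d + 1) → R) (k N : ℕ) : Fin N → R :=
  fun p => if h : k ≤ p.val ∧ p.val ≤ k + d then v ⟨p.val - k, by omega⟩ else 0

section Krylov

variable {R : Type*} [CommSemiring R] {ι : Type*} [Fintype ι] [DecidableEq ι]

def krylov (C : Matrix ι ι R) (w : ι → R) (N : ℕ) : Matrix ι (Fin N) R :=
  Matrix.of fun p q => (C ^ (q : ℕ) *ᵥ w) p

variable (C : Matrix ι ι R) (w : ι → R) {N : ℕ}

lemma krylov_mulVec (x : Fin N → R) : krylov C w N *ᵥ x = ∑ q, x q • (C ^ (q : ℕ) *ᵥ w) := by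
  ext p
  simp [krylov, mulVec, dotProduct, Finset.sum_apply, mul_comm]

lemma mul_krylov_apply {κ : Type*} (B : Matrix κ ι R) (p : κ) (q : Fin N) :
    (B * krylov C w N) p q = (B *ᵥ (C ^ (q : ℕ) *ᵥ w)) p := rfl

lemma krylov_mulVec_shiftVec {d k : ℕ} {v : Fin (d + 1) → R}
    (hrel : ∑ m : Fin (d + 1), v m • (C ^ (m : ℕ) *ᵥ w) = 0) (hk : k + d < N) :
    krylov C w N *ᵥ shiftVec v k N = 0 := by
  have hsum : ∑ m : Fin (d + 1), v m • (C ^ (k + m : ℕ) *ᵥ w) =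
      ∑ q : Fin N, shiftVec v k N q • (C ^ (q : ℕ) *ᵥ w) := by
    refine Fintype.sum_of_injective (fun m : Fin (d + 1) => (⟨k + m, by omega⟩ : Fin N))
      (fun a b hab => Fin.ext (by simpa using congrArg Fin.val hab)) _ _ (fun q hq => ?_)
      (fun m => ?_)
    · rw [shiftVec, dif_neg, zero_smul]
      rintro ⟨hkq, hqk⟩
      exact hq ⟨⟨q.val - k, by omega⟩, by ext; simp; omega⟩
    · simp [shiftVec, m.is_le]
  rw [krylov_mulVec, ← hsum]
  simpa [mulVec_sum, mulVec_smul, mulVec_mulVec, ← pow_add] using congrArg (C ^ k *ᵥ ·) hrel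

end Krylov

lemma linearIndependent_shiftVec {K : Type*} [Field K] {d r N : ℕ} (v : Fin (d + 1) → K)
    (h0 : v 0 ≠ 0) (hr : r ≤ N) : LinearIndependent K fun k : Fin r => shiftVec v k N := by
  -- on the first `r` coordinates the shifts form an upper triangular matrix with diagonal `v 0`
  let T : Matrix (Fin r) (Fin r) K := Matrix.of fun k j => shiftVec v k N (Fin.castLE hr j)
  have hT : T.IsUpperTriangular := fun k j (hjk : j < k) => by
    simp only [T, of_apply, shiftVec, Fin.val_castLE]
    rw [dif_neg (by omega)]
  have hdet : IsUnit T.det := by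
    rw [det_of_isUpperTriangular hT, isUnit_iff_ne_zero, Finset.prod_ne_zero_iff]
    intro k _
    simpa [T, shiftVec] using h0
  refine LinearIndependent.of_comp (LinearMap.funLeft K K (Fin.castLE hr)) ?_
  exact linearIndependent_rows_iff_isUnit.2 ((isUnit_iff_isUnit_det T).2 hdet)

lemma rank_eq_of_isUnit_det_submatrix_castAdd {R : Type*} [CommRing R] [Nontrivial R] {n r : ℕ}
    (M : Matrix (Fin n) (Fin (n + r)) R) (h : IsUnit (M.submatrix id (Fin.castAdd r)).det) :
    M.rank = n := by
  refine le_antisymm M.rank_le_height ?_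
  calc n = (M.submatrix id (Fin.castAdd r)).rank := by
        rw [rank_of_isUnit _ ((isUnit_iff_isUnit_det _).2 h), Fintype.card_fin]
    _ ≤ M.rank := M.rank_submatrix_le id (Fin.castAdd r)

lemma span_eq_ker_mulVecLin {K : Type*} [Field K] {m n ι : Type*} [Fintype n] [Fintype ι]
    (M : Matrix m n K) {e : ι → n → K} (he : LinearIndependent K e) (hker : ∀ i, M *ᵥ e i = 0)
    (hcard : M.rank + Fintype.card ι = Fintype.card n) :
    Submodule.span K (Set.range e) = LinearMap.ker M.mulVecLin := by
  refine Submodule.eq_of_le_of_finrank_le ?_ ?_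
  · rw [Submodule.span_le]
    rintro _ ⟨i, rfl⟩
    exact hker i
  · have := LinearMap.finrank_range_add_finrank_ker M.mulVecLin
    rw [finrank_span_eq_card he]
    rw [Module.finrank_fintype_fun_eq_card] at this
    unfold rank at hcard
    omega

namespace Cr

variable {n : ℕ} (v : Fin (n + 1) → ℝ)

lemma mulVec_single_of_lt (j : Fin n) (hj : j.val + 1 < n) :
    Cr n v *ᵥ Pi.single j 1 = Pi.single ⟨j.val + 1, hj⟩ 1 := by
  rw [mulVec_single_one]
  ext i
  simp only [col_apply, Cr, of_apply, Pi.single_apply, Fin.ext_iff]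
  split_ifs <;> first | rfl | omega

lemma mulVec_single_last (hn : 0 < n) :
    Cr n v *ᵥ Pi.single ⟨n - 1, by omega⟩ 1 = fun i => -v i.castSucc / v (Fin.last n) := by
  rw [mulVec_single_one]
  ext i
  exact if_pos rfl

lemma pow_mulVec_single_zero (hn : 0 < n) {k : ℕ} (hk : k < n) :
    Cr n v ^ k *ᵥ Pi.single ⟨0, hn⟩ 1 = Pi.single ⟨k, hk⟩ 1 := by
  induction k with
  | zero => rw [pow_zero, one_mulVec]
  | succ k ih =>
    rw [pow_succ', ← mulVec_mulVec, ih (by omega), mulVec_single_of_lt]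

lemma sum_smul_pow_mulVec_single_zero (hn : 0 < n) (hv : v (Fin.last n) ≠ 0) :
    ∑ m : Fin (n + 1), v m • (Cr n v ^ (m : ℕ) *ᵥ Pi.single ⟨0, hn⟩ 1) = 0 := by
  have hpow : Cr n v ^ n *ᵥ Pi.single ⟨0, hn⟩ 1 = fun i => -v i.castSucc / v (Fin.last n) := by
    have hsplit : Cr n v ^ n = Cr n v * Cr n v ^ (n - 1) := by
      rw [← pow_succ', Nat.sub_add_cancel hn]
    rw [hsplit, ← mulVec_mulVec, pow_mulVec_single_zero v hn (Nat.sub_lt hn one_pos)]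
    exact mulVec_single_last v hn
  rw [Fin.sum_univ_castSucc]
  simp only [Fin.val_castSucc, Fin.val_last, hpow,
    fun m : Fin n => pow_mulVec_single_zero v hn m.isLt]
  ext i
  simp only [Pi.add_apply, Finset.sum_apply, Pi.smul_apply, Pi.single_apply, smul_eq_mul,
    mul_ite, mul_one, mul_zero, Finset.sum_ite_eq, Finset.mem_univ, if_true, Pi.zero_apply]
  field_simp
  ring

-- The first basis vector is cyclic for `Cr n v`, so the relation above propagates to every
-- basis vector.
lemma sum_smul_pow_eq_zero (hn : 0 < n) (hv : v (Fin.last n) ≠ 0) :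
    ∑ m : Fin (n + 1), v m • Cr n v ^ (m : ℕ) = 0 := by
  refine ext_of_mulVec_single fun i => ?_
  have hcomm : Commute (∑ m : Fin (n + 1), v m • Cr n v ^ (m : ℕ)) (Cr n v ^ (i : ℕ)) :=
    Commute.sum_left _ _ _ fun m _ => ((Commute.pow_pow_self _ _ _).smul_left _)
  rw [← pow_mulVec_single_zero v hn i.isLt, mulVec_mulVec, hcomm.eq, ← mulVec_mulVec,
    sum_mulVec]
  simp only [smul_mulVec, sum_smul_pow_mulVec_single_zero v hn hv, zero_mulVec, mulVec_zero]

lemma isUnit_det (hn : 0 < n) (h0 : v 0 ≠ 0) (hv : v (Fin.last n) ≠ 0) :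
    IsUnit (Cr n v).det := by
  have hrel := sum_smul_pow_eq_zero v hn hv
  rw [Fin.sum_univ_succ] at hrel
  simp only [Fin.val_zero, pow_zero, Fin.val_succ, pow_succ', ← mul_smul_comm,
    ← Finset.mul_sum] at hrel
  refine isUnit_det_of_right_inverse (B := -(v 0)⁻¹ • ∑ m : Fin n, v m.succ • Cr n v ^ (m : ℕ)) ?_
  rw [mul_smul_comm, eq_neg_of_add_eq_zero_right hrel, smul_neg, neg_smul, neg_neg, smul_smul,
    inv_mul_cancel₀ h0, one_smul]

lemma eq_mul_krylov {r : ℕ} (hn : 0 < n) (hC : IsUnit (Cr n v).det)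
    (A : Matrix (Fin n) (Fin n) ℝ) (t : ℤ) (M : Matrix (Fin n) (Fin (n + r)) ℝ)
    (hM : ∀ (p : Fin n) (q : Fin (n + r)),
      M p q = if h : q.val < n then (A * Cr n v ^ t) p ⟨q.val, h⟩
        else (A * Cr n v ^ (t + ((q.val - n + 1 : ℕ) : ℤ))) p ⟨n - 1, by omega⟩) :
    M = A * Cr n v ^ t * krylov (Cr n v) (Pi.single ⟨0, hn⟩ 1) (n + r) := by
  ext p q
  rw [hM, mul_krylov_apply]
  split_ifs with hq
  · rw [pow_mulVec_single_zero v hn hq, mulVec_single_one, col_apply]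
  · have hcol : Cr n v ^ (q : ℕ) *ᵥ Pi.single ⟨0, hn⟩ 1 =
        Cr n v ^ (q - n + 1) *ᵥ Pi.single ⟨n - 1, by omega⟩ 1 := by
      rw [← pow_mulVec_single_zero v hn (Nat.sub_lt hn one_pos), mulVec_mulVec, ← pow_add]
      congr 2
      omega
    rw [hcol, mulVec_mulVec, mulVec_single_one, col_apply, Matrix.mul_assoc, ← zpow_natCast,
      ← zpow_add hC]

end Cr

lemma shiftVec_revVec_rev {n r : ℕ} (u : Fin (n + 1) → ℝ) (i : Fin r) (p : Fin (n + r)) :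
    shiftVec (revVec u) (i.rev : ℕ) (n + r) p =
      if _ : r - 1 - i.val ≤ p.val ∧ p.val ≤ (r - 1 - i.val) + n
        then u ⟨n - (p.val - (r - 1 - i.val)), by omega⟩ else 0 := by
  rw [shiftVec, Fin.val_rev]
  split_ifs with h₁ h₂ h₂
  · simp only [revVec]
    congr 1
    ext
    simp only [Fin.val_rev]
    omega
  · omega
  · omega
  · rfl

/-- Corollary (kernel of the horizontal Hankel extension): the extension matrix
built from `A C_r(u^J)^t` has rank `n` and its kernel has the shifted copies of the
reversed vector `u^J` as a basis. -/
theorem hankel_extension_kernel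
    (n : ℕ) (hn : 2 ≤ n)
    (u : Fin (n + 1) → ℝ) (hu1 : u 0 ≠ 0) (hun : u (Fin.last n) ≠ 0)
    (A : Matrix (Fin n) (Fin n) ℝ) (hA : IsUnit A.det)
    (t : ℤ) (r : ℕ)
    (M : Matrix (Fin n) (Fin (n + r)) ℝ)
    (hM : ∀ (p : Fin n) (q : Fin (n + r)),
      M p q = if h : q.val < n then (A * Cr n (revVec u) ^ t) p ⟨q.val, h⟩
        else (A * Cr n (revVec u) ^ (t + ((q.val - n + 1 : ℕ) : ℤ))) p ⟨n - 1, by omega⟩)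
    (eJ : Fin r → Fin (n + r) → ℝ)
    (heJ : ∀ (i : Fin r) (p : Fin (n + r)),
      eJ i p = if h : r - 1 - i.val ≤ p.val ∧ p.val ≤ (r - 1 - i.val) + n
        then u ⟨n - (p.val - (r - 1 - i.val)), by omega⟩ else 0) :
    M.rank = n ∧ LinearIndependent ℝ eJ ∧
      Submodule.span ℝ (Set.range eJ) = LinearMap.ker M.mulVecLin := by
  have hn0 : 0 < n := by omega
  have hv0 : revVec u 0 ≠ 0 := by simpa [revVec] using hun
  have hvl : revVec u (Fin.last n) ≠ 0 := by simpa [revVec] using hu1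
  have hC : IsUnit (Cr n (revVec u)).det := Cr.isUnit_det _ hn0 hv0 hvl
  have hB : IsUnit (A * Cr n (revVec u) ^ t).det := by
    rw [det_mul]
    exact hA.mul (isUnit_det_zpow_iff.2 (Or.inl hC))
  have hrank : M.rank = n := by
    have hblock : M.submatrix id (Fin.castAdd r) = A * Cr n (revVec u) ^ t := by
      ext p j
      simp [hM]
    exact rank_eq_of_isUnit_det_submatrix_castAdd M (hblock ▸ hB)
  have heJ' : eJ = fun i => shiftVec (revVec u) (i.rev : ℕ) (n + r) := by
    ext i p
    rw [heJ, shiftVec_revVec_rev]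
  have hLI : LinearIndependent ℝ eJ := heJ' ▸
    (linearIndependent_shiftVec _ hv0 (by omega)).comp _ Fin.rev_injective
  refine ⟨hrank, hLI, span_eq_ker_mulVecLin M hLI (fun i => ?_) (by simp [hrank])⟩
  rw [Cr.eq_mul_krylov _ hn0 hC A t M hM, ← mulVec_mulVec, heJ',
    krylov_mulVec_shiftVec _ _ (Cr.sum_smul_pow_mulVec_single_zero _ hn0 hvl) (by omega),
    mulVec_zero]
end
end

section
/- Let n ≥ 2, let T be an n×n real Toeplitz matrix, and let u = (u₁,…,u_{n+1}) ∈ ℝ^{n+1} with u₁ ≠ 0 and u_{n+1} ≠ 0. If u lies in the kernel of ∂T, then C_t(u)·T and C_b(u)·T are Toeplitz matrices and u lies in the kernel of ∂(C_t(u)·T) and in the kernel of ∂(C_b(u)·T). -/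
open Matrix Polynomial

noncomputable section

/-!
A Toeplitz matrix is `toeplitzOf n a` for a symbol `a : ℤ → ℝ` of which only the values on
`(-n, n)` matter, and `u ∈ ker ∂T` says that `∑ⱼ a (s - j) u j = 0` for `s = 1, …, n - 1`.
Since `u n ≠ 0`, the free value `a (-n)` can be chosen so that this recurrence also holds at
`s = 0`; then `C_t(u) T` is the Toeplitz matrix of the shifted symbol `a (· - 1)` (its first row
is the recurrence solved for `a (-1 - j)`), and the recurrence of the shifted symbol at
`s = 1, …, n - 1` is the old one at `s = 0, …, n - 2`. Symmetrically, `u 0 ≠ 0` lets one choose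
`a n` so that the recurrence holds at `s = n`, and `C_b(u) T` has the symbol `a (· + 1)`.
-/

def toeplitzOf (n : ℕ) (a : ℤ → ℝ) : Matrix (Fin n) (Fin n) ℝ :=
  Matrix.of fun i j => a (i - j)

def seqConv {m : ℕ} (a : ℤ → ℝ) (u : Fin m → ℝ) (s : ℤ) : ℝ :=
  ∑ j : Fin m, a (s - j) * u j

section

variable {n : ℕ}

theorem IsToeplitz.apply_add {T : Matrix (Fin n) (Fin n) ℝ} (hT : IsToeplitz T)
    (i j k : ℕ) (hi : i + k < n) (hj : j + k < n) :
    T ⟨i + k, hi⟩ ⟨j + k, hj⟩ = T ⟨i, by omega⟩ ⟨j, by omega⟩ := by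
  induction k with
  | zero => rfl
  | succ k ih =>
    exact (hT ⟨i + k, by omega⟩ ⟨j + k, by omega⟩ hi hj).trans (ih (by omega) (by omega))

theorem IsToeplitz.apply_eq_of_sub_eq {T : Matrix (Fin n) (Fin n) ℝ} (hT : IsToeplitz T)
    {i j i' j' : Fin n} (h : (i : ℤ) - j = i' - j') : T i j = T i' j' := by
  rcases le_total i.val i'.val with hle | hle
  · have := hT.apply_add i j (i' - i) (by omega) (by omega)
    convert this.symm using 2 <;> ext <;> simp <;> omega
  · have := hT.apply_add i' j' (i - i') (by omega) (by omega)
    convert this using 2 <;> ext <;> simp <;> omega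

theorem IsToeplitz.exists_eq_toeplitzOf {T : Matrix (Fin n) (Fin n) ℝ} (hT : IsToeplitz T) :
    ∃ a, T = toeplitzOf n a := by
  classical
  refine ⟨fun d => if h : ∃ p : Fin n × Fin n, (p.1 : ℤ) - p.2 = d
    then T h.choose.1 h.choose.2 else 0, ?_⟩
  ext i j
  have h : ∃ p : Fin n × Fin n, (p.1 : ℤ) - p.2 = i - j := ⟨(i, j), rfl⟩
  simp only [toeplitzOf, of_apply, dif_pos h]
  exact hT.apply_eq_of_sub_eq h.choose_spec.symm

theorem isToeplitz_toeplitzOf (a : ℤ → ℝ) : IsToeplitz (toeplitzOf n a) := by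
  intro i j hi hj
  simp only [toeplitzOf, of_apply]
  congr 1
  push_cast
  ring

theorem dT_toeplitzOf_apply (a : ℤ → ℝ) (i : Fin (n - 1)) (j : Fin (n + 1)) :
    dT (toeplitzOf n a) i j = a (i + 1 - j) := by
  simp only [dT, toeplitzOf, of_apply]
  split_ifs <;> congr 1 <;> omega

theorem dT_toeplitzOf_mulVec_eq_zero_iff (a : ℤ → ℝ) (u : Fin (n + 1) → ℝ) :
    dT (toeplitzOf n a) *ᵥ u = 0 ↔ ∀ s ∈ Set.Icc (1 : ℤ) (n - 1), seqConv a u s = 0 := by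
  have hrow (i : Fin (n - 1)) : (dT (toeplitzOf n a) *ᵥ u) i = seqConv a u (i + 1) := by
    simp only [mulVec, dotProduct, dT_toeplitzOf_apply, seqConv]
  constructor
  · rintro h s ⟨hs₁, hs₂⟩
    have := congrFun h ⟨(s - 1).toNat, by omega⟩
    rwa [hrow, Pi.zero_apply, show (((s - 1).toNat : ℕ) : ℤ) + 1 = s by omega] at this
  · intro h
    funext i
    rw [hrow]
    exact h _ ⟨by omega, by omega⟩

theorem seqConv_comp_add {m : ℕ} (a : ℤ → ℝ) (u : Fin m → ℝ) (c s : ℤ) :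
    seqConv (fun d => a (d + c)) u s = seqConv a u (s + c) :=
  Finset.sum_congr rfl fun j _ => by simp only [sub_add_eq_add_sub]

theorem exists_toeplitzOf_eq_seqConv_eq_zero (a : ℤ → ℝ) {u : Fin (n + 1) → ℝ}
    {j₀ : Fin (n + 1)} (hj₀ : u j₀ ≠ 0) {s₀ : ℤ} (hd : n ≤ |s₀ - j₀|) :
    ∃ b, toeplitzOf n b = toeplitzOf n a ∧ seqConv b u s₀ = 0 ∧
      ∀ s ∈ Set.Icc (1 : ℤ) (n - 1), seqConv b u s = seqConv a u s := by
  have hout (e : ℤ) (h₁ : -n < e) (h₂ : e < n) : e ≠ s₀ - j₀ := by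
    rw [le_abs'] at hd
    omega
  set c := a (s₀ - j₀) - seqConv a u s₀ / u j₀
  refine ⟨Function.update a (s₀ - j₀) c, ?_, ?_, ?_⟩
  · ext i j
    exact Function.update_of_ne (hout _ (by omega) (by omega)) _ _
  · have hdiff : seqConv (Function.update a (s₀ - j₀) c) u s₀ - seqConv a u s₀ =
        (c - a (s₀ - j₀)) * u j₀ := by
      rw [seqConv, seqConv, ← Finset.sum_sub_distrib, Finset.sum_eq_single j₀]
      · rw [Function.update_self, ← sub_mul]
      · intro j _ hj
        rw [Function.update_of_ne (fun h => hj (Fin.ext (by omega))), sub_self]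
      · simp
    rw [sub_sub_cancel_left, neg_mul, div_mul_cancel₀ _ hj₀] at hdiff
    linarith
  · rintro s ⟨hs₁, hs₂⟩
    exact Finset.sum_congr rfl fun j _ => by
      rw [Function.update_of_ne (hout _ (by omega) (by omega))]

end

section

variable {n : ℕ} {a : ℤ → ℝ} {u : Fin (n + 1) → ℝ}

theorem Ct_mul_toeplitzOf (hun : u (Fin.last n) ≠ 0)
    (h : ∀ s ∈ Set.Icc (0 : ℤ) (n - 1), seqConv a u s = 0) :
    Ct n u * toeplitzOf n a = toeplitzOf n fun d => a (d - 1) := by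
  ext i j
  rw [mul_apply]
  by_cases hi : i.val = 0
  · have hrow := h (n - 1 - j) ⟨by omega, by omega⟩
    rw [seqConv, Fin.sum_univ_castSucc] at hrow
    have hsum : ∑ k, Ct n u i k * toeplitzOf n a k j =
        -(∑ m : Fin n, a (n - 1 - j - (m.castSucc : Fin (n + 1))) * u m.castSucc) /
          u (Fin.last n) := by
      rw [neg_div, Finset.sum_div, ← Finset.sum_neg_distrib]
      refine Fintype.sum_equiv Fin.revPerm _ _ fun k => ?_
      have hk : (⟨n - 1 - k, by omega⟩ : Fin (n + 1)) = k.rev.castSucc :=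
        Fin.ext (by simp [Fin.val_rev]; omega)
      simp only [Ct, toeplitzOf, of_apply, if_pos hi, Fin.revPerm_apply, hk]
      rw [show (n : ℤ) - 1 - j - (k.rev.castSucc : Fin (n + 1)) = k - j by
        simp [Fin.val_rev]; omega]
      ring
    rw [hsum, eq_neg_of_add_eq_zero_left hrow]
    simp only [toeplitzOf, of_apply, hi, neg_neg]
    rw [mul_div_cancel_right₀ _ hun]
    congr 1
    simp
    omega
  · rw [Finset.sum_eq_single ⟨i - 1, by omega⟩]
    · simp only [Ct, toeplitzOf, of_apply, if_neg hi]
      rw [if_pos (by omega), one_mul]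
      congr 1
      omega
    · intro k _ hk
      simp only [Ct, of_apply, if_neg hi]
      rw [if_neg (fun hk' => hk (Fin.ext (by simp; omega))), zero_mul]
    · simp

theorem Cb_mul_toeplitzOf (hu0 : u 0 ≠ 0)
    (h : ∀ s ∈ Set.Icc (1 : ℤ) n, seqConv a u s = 0) :
    Cb n u * toeplitzOf n a = toeplitzOf n fun d => a (d + 1) := by
  ext i j
  rw [mul_apply]
  by_cases hi : i.val = n - 1
  · have hrow := h (n - j) ⟨by omega, by omega⟩
    rw [seqConv, Fin.sum_univ_succ] at hrow
    have hsum : ∑ k, Cb n u i k * toeplitzOf n a k j =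
        -(∑ m : Fin n, a (n - j - (m.succ : Fin (n + 1))) * u m.succ) / u 0 := by
      rw [neg_div, Finset.sum_div, ← Finset.sum_neg_distrib]
      refine Fintype.sum_equiv Fin.revPerm _ _ fun k => ?_
      have hk : (⟨n - k, by omega⟩ : Fin (n + 1)) = k.rev.succ :=
        Fin.ext (by simp [Fin.val_rev]; omega)
      simp only [Cb, toeplitzOf, of_apply, if_pos hi, Fin.revPerm_apply, hk]
      rw [show (n : ℤ) - j - (k.rev.succ : Fin (n + 1)) = k - j by
        simp [Fin.val_rev]; omega]
      ring
    rw [hsum, eq_neg_of_add_eq_zero_right hrow]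
    simp only [toeplitzOf, of_apply, neg_neg]
    rw [mul_div_cancel_right₀ _ hu0]
    congr 1
    simp
    omega
  · rw [Finset.sum_eq_single ⟨i + 1, by omega⟩]
    · simp only [Cb, toeplitzOf, of_apply, if_neg hi, if_true, one_mul]
      congr 1
      push_cast
      ring
    · intro k _ hk
      simp only [Cb, of_apply, if_neg hi]
      rw [if_neg (fun hk' => hk (Fin.ext hk')), zero_mul]
    · simp

theorem exists_Ct_mul_toeplitzOf (hun : u (Fin.last n) ≠ 0)
    (hker : ∀ s ∈ Set.Icc (1 : ℤ) (n - 1), seqConv a u s = 0) :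
    ∃ b, Ct n u * toeplitzOf n a = toeplitzOf n b ∧
      ∀ s ∈ Set.Icc (1 : ℤ) (n - 1), seqConv b u s = 0 := by
  obtain ⟨b, hba, hb₀, hb⟩ := exists_toeplitzOf_eq_seqConv_eq_zero a hun (s₀ := 0) (by simp)
  have hbu : ∀ s ∈ Set.Icc (0 : ℤ) (n - 1), seqConv b u s = 0 := by
    rintro s ⟨hs₁, hs₂⟩
    rcases hs₁.eq_or_lt with rfl | hs₁
    · exact hb₀
    · rw [hb s ⟨hs₁, hs₂⟩]
      exact hker s ⟨hs₁, hs₂⟩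
  refine ⟨fun d => b (d - 1), by rw [← hba]; exact Ct_mul_toeplitzOf hun hbu,
    fun s ⟨hs₁, hs₂⟩ => (seqConv_comp_add b u (-1) s).trans (hbu _ ⟨by omega, by omega⟩)⟩

theorem exists_Cb_mul_toeplitzOf (hu0 : u 0 ≠ 0)
    (hker : ∀ s ∈ Set.Icc (1 : ℤ) (n - 1), seqConv a u s = 0) :
    ∃ b, Cb n u * toeplitzOf n a = toeplitzOf n b ∧
      ∀ s ∈ Set.Icc (1 : ℤ) (n - 1), seqConv b u s = 0 := by
  obtain ⟨b, hba, hbn, hb⟩ := exists_toeplitzOf_eq_seqConv_eq_zero a hu0 (s₀ := n) (by simp)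
  have hbu : ∀ s ∈ Set.Icc (1 : ℤ) n, seqConv b u s = 0 := by
    rintro s ⟨hs₁, hs₂⟩
    rcases hs₂.eq_or_lt with rfl | hs₂
    · exact hbn
    · rw [hb s ⟨hs₁, by omega⟩]
      exact hker s ⟨hs₁, by omega⟩
  refine ⟨fun d => b (d + 1), by rw [← hba]; exact Cb_mul_toeplitzOf hu0 hbu,
    fun s ⟨hs₁, hs₂⟩ => (seqConv_comp_add b u 1 s).trans (hbu _ ⟨by omega, by omega⟩)⟩

end

theorem toeplitz_kernel_shift_general
    (n : ℕ) (T : Matrix (Fin n) (Fin n) ℝ) (hT : IsToeplitz T)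
    (u : Fin (n + 1) → ℝ) (hu1 : u 0 ≠ 0) (hun : u (Fin.last n) ≠ 0)
    (hker : (dT T).mulVec u = 0) :
    IsToeplitz (Ct n u * T) ∧ IsToeplitz (Cb n u * T) ∧
      (dT (Ct n u * T)).mulVec u = 0 ∧ (dT (Cb n u * T)).mulVec u = 0 := by
  obtain ⟨a, rfl⟩ := hT.exists_eq_toeplitzOf
  rw [dT_toeplitzOf_mulVec_eq_zero_iff] at hker
  obtain ⟨b, hb, hbu⟩ := exists_Ct_mul_toeplitzOf hun hker
  obtain ⟨c, hc, hcu⟩ := exists_Cb_mul_toeplitzOf hu1 hker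
  rw [hb, hc, dT_toeplitzOf_mulVec_eq_zero_iff, dT_toeplitzOf_mulVec_eq_zero_iff]
  exact ⟨isToeplitz_toeplitzOf b, isToeplitz_toeplitzOf c, hbu, hcu⟩

/-- Lemma (kernel shift, Toeplitz version): if `u ∈ ker ∂T` for a Toeplitz matrix `T`,
then `C_t(u)T` and `C_b(u)T` are Toeplitz and `u` lies in the kernels of
`∂(C_t(u)T)` and `∂(C_b(u)T)`. -/
theorem toeplitz_kernel_shift
    (n : ℕ) (hn : 2 ≤ n) (T : Matrix (Fin n) (Fin n) ℝ) (hT : IsToeplitz T)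
    (u : Fin (n + 1) → ℝ) (hu1 : u 0 ≠ 0) (hun : u (Fin.last n) ≠ 0)
    (hker : (dT T).mulVec u = 0) :
    IsToeplitz (Ct n u * T) ∧ IsToeplitz (Cb n u * T) ∧
      (dT (Ct n u * T)).mulVec u = 0 ∧ (dT (Cb n u * T)).mulVec u = 0 :=
  toeplitz_kernel_shift_general n T hT u hu1 hun hker
end
end
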